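/- arXiv:2406.13944 — 7 statements merged into one kernel-verified Lean document; each statement's English description precedes it below -/
import Mathlib

section
/- Let n₁, n₂, p be positive integers, X⁽¹⁾ ∈ ℝ^{n₁×p}, X⁽²⁾ ∈ ℝ^{n₂×p}, y⁽¹⁾ ∈ ℝ^{n₁}, y⁽²⁾ ∈ ℝ^{n₂}, and suppose there exists b ∈ ℝ^p with X⁽¹⁾b = y⁽¹⁾ and X⁽²⁾b = y⁽²⁾. Let β̂ be the unique element of minimal Euclidean norm of the affine set {b ∈ ℝ^p : X⁽¹⁾b = y⁽¹⁾, X⁽²⁾b = y⁽²⁾}. Then for every w₁, w₂ > 0 and every real n > 0, the matrix w₁X⁽¹⁾ᵀX⁽¹⁾ + w₂X⁽²⁾ᵀX⁽²⁾ + nλI is invertible for every λ > 0, and (w₁X⁽¹⁾ᵀX⁽¹⁾ + w₂X⁽²⁾ᵀX⁽²⁾ + nλI)⁻¹(w₁X⁽¹⁾ᵀy⁽¹⁾ + w₂X⁽²⁾ᵀy⁽²⁾) converges to β̂ as λ → 0⁺. In particular, this ridgeless limit is the same for every choice of positive weights w₁, w₂. -/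
/-!
Put `A = w₁ X₁ᵀX₁ + w₂ X₂ᵀX₂ ⪰ 0`. Its kernel is the common kernel of `X₁` and `X₂`, to which
the minimal-norm solution `β̂` is orthogonal; as `A` is symmetric, `β̂ = A u` for some `u`.
Since `A β̂` is the weighted right-hand side, the ridge estimator is
`(A + μ)⁻¹ A β̂ = β̂ - μ (u - μ (A + μ)⁻¹ u)`, and `‖μ (A + μ)⁻¹ x‖ ≤ ‖x‖` for `A ⪰ 0` makes the
correction `O(μ)`, whatever the weights.
-/

open Matrix Filter Topology

namespace Matrix

variable {ι m : Type*}

section Fintype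

variable [Fintype ι] {A B : Matrix ι ι ℝ}

theorem dotProduct_eq_zero_of_forall_dotProduct_self_le {β v : ι → ℝ}
    (h : ∀ t : ℝ, β ⬝ᵥ β ≤ (β + t • v) ⬝ᵥ (β + t • v)) : v ⬝ᵥ β = 0 := by
  have hquad : ∀ t : ℝ, 0 ≤ (v ⬝ᵥ v) * (t * t) + 2 * (v ⬝ᵥ β) * t + 0 := fun t => by
    have := h t
    simp only [add_dotProduct, dotProduct_add, smul_dotProduct, dotProduct_smul, smul_eq_mul,
      dotProduct_comm β v] at this
    linarith
  have := discrim_le_zero hquad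
  rw [discrim] at this
  nlinarith [sq_nonneg (v ⬝ᵥ β)]

theorem PosSemidef.mulVec_eq_zero_of_add_mulVec_eq_zero (hA : A.PosSemidef) (hB : B.PosSemidef)
    {v : ι → ℝ} (h : (A + B) *ᵥ v = 0) : A *ᵥ v = 0 := by
  have hAv := hA.dotProduct_mulVec_nonneg v
  have hBv := hB.dotProduct_mulVec_nonneg v
  have hsum : star v ⬝ᵥ A *ᵥ v + star v ⬝ᵥ B *ᵥ v = 0 := by
    rw [← dotProduct_add, ← add_mulVec, h, dotProduct_zero]
  exact (hA.dotProduct_mulVec_zero_iff v).mp (by linarith)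

variable [Fintype m]

theorem posSemidef_transpose_mul_self (X : Matrix m ι ℝ) : (Xᵀ * X).PosSemidef := by
  simpa using posSemidef_conjTranspose_mul_self X

theorem mulVec_eq_zero_of_smul_transpose_mul_self_mulVec_eq_zero {X : Matrix m ι ℝ} {w : ℝ}
    (hw : w ≠ 0) {v : ι → ℝ} (h : (w • (Xᵀ * X)) *ᵥ v = 0) : X *ᵥ v = 0 := by
  rw [smul_mulVec, smul_eq_zero_iff_right hw] at h
  have hker : v ∈ LinearMap.ker (Xᵀ * X).mulVecLin := h
  rwa [ker_mulVecLin_transpose_mul_self, LinearMap.mem_ker, mulVecLin_apply] at hker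

end Fintype

section Ridge

variable [DecidableEq ι] {A : Matrix ι ι ℝ} {μ : ℝ}

theorem PosSemidef.posDef_add_smul_one (hA : A.PosSemidef) (hμ : 0 < μ) :
    (A + μ • 1).PosDef :=
  PosDef.posSemidef_add hA (PosDef.one.smul hμ)

variable [Fintype ι]

theorem add_smul_one_mulVec (A : Matrix ι ι ℝ) (μ : ℝ) (v : ι → ℝ) :
    (A + μ • 1) *ᵥ v = A *ᵥ v + μ • v := by
  rw [add_mulVec, smul_mulVec, one_mulVec]

theorem inv_add_smul_one_mulVec_mulVec (h : IsUnit (A + μ • 1)) (x : ι → ℝ) :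
    (A + μ • 1)⁻¹ *ᵥ (A *ᵥ x) = x - μ • (A + μ • 1)⁻¹ *ᵥ x := by
  have hdet := (isUnit_iff_isUnit_det _).mp h
  calc (A + μ • 1)⁻¹ *ᵥ (A *ᵥ x)
      = (A + μ • 1)⁻¹ *ᵥ ((A + μ • 1) *ᵥ x - μ • x) := by
        rw [add_smul_one_mulVec, add_sub_cancel_right]
    _ = x - μ • (A + μ • 1)⁻¹ *ᵥ x := by
        rw [mulVec_sub, mulVec_mulVec, nonsing_inv_mul _ hdet, one_mulVec, mulVec_smul]

theorem PosSemidef.norm_smul_inv_add_smul_one_mulVec_le (hA : A.PosSemidef) (hμ : 0 < μ)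
    (x : ι → ℝ) :
    ‖WithLp.toLp 2 (μ • (A + μ • 1)⁻¹ *ᵥ x)‖ ≤ ‖WithLp.toLp 2 x‖ := by
  have hdet := (isUnit_iff_isUnit_det _).mp (hA.posDef_add_smul_one hμ).isUnit
  set v := (A + μ • 1)⁻¹ *ᵥ x
  have hv : A *ᵥ v + μ • v = x := by
    rw [← add_smul_one_mulVec, mulVec_mulVec, mul_nonsing_inv _ hdet, one_mulVec]
  have hAv : 0 ≤ v ⬝ᵥ A *ᵥ v := by simpa using hA.dotProduct_mulVec_nonneg v
  have key : μ * ‖WithLp.toLp 2 v‖ ^ 2 ≤ ‖WithLp.toLp 2 v‖ * ‖WithLp.toLp 2 x‖ :=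
    calc μ * ‖WithLp.toLp 2 v‖ ^ 2 ≤ v ⬝ᵥ A *ᵥ v + μ * (v ⬝ᵥ v) := by
          rw [← real_inner_self_eq_norm_sq, EuclideanSpace.inner_toLp_toLp]
          simpa using hAv
      _ = inner ℝ (WithLp.toLp 2 v) (WithLp.toLp 2 x) := by
          rw [EuclideanSpace.inner_toLp_toLp, ← hv]
          simp [dotProduct_add, dotProduct_comm]
      _ ≤ _ := real_inner_le_norm _ _
  rw [WithLp.toLp_smul, norm_smul, Real.norm_of_nonneg hμ.le]
  rcases (norm_nonneg (WithLp.toLp 2 v)).eq_or_lt with h | h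
  · rw [← h, mul_zero]
    exact norm_nonneg _
  · nlinarith

theorem IsHermitian.exists_mulVec_eq (hA : A.IsHermitian) {β : ι → ℝ}
    (hβ : ∀ v, A *ᵥ v = 0 → v ⬝ᵥ β = 0) : ∃ u, A *ᵥ u = β := by
  have hker : WithLp.toLp 2 β ∈ (LinearMap.ker (toEuclideanLin A))ᗮ := by
    refine (Submodule.mem_orthogonal' _ _).2 fun v hv => ?_
    rw [LinearMap.mem_ker, toLpLin_apply, WithLp.toLp_eq_zero] at hv
    simpa [EuclideanSpace.inner_eq_star_dotProduct] using hβ _ hv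
  rw [← (isSymmetric_toEuclideanLin_iff.mpr hA).orthogonal_range,
    Submodule.orthogonal_orthogonal] at hker
  obtain ⟨u, hu⟩ := hker
  exact ⟨WithLp.ofLp u, by simpa [toLpLin_apply] using congrArg WithLp.ofLp hu⟩

theorem PosSemidef.tendsto_inv_add_smul_one_mulVec_mulVec (hA : A.PosSemidef) {β : ι → ℝ}
    (hβ : ∀ v, A *ᵥ v = 0 → v ⬝ᵥ β = 0) :
    Tendsto (fun μ : ℝ => (A + μ • 1)⁻¹ *ᵥ (A *ᵥ β)) (𝓝[>] 0) (𝓝 β) := by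
  obtain ⟨u, rfl⟩ := hA.isHermitian.exists_mulVec_eq hβ
  -- `ι → ℝ` carries the sup norm, so the estimate is run in `EuclideanSpace ℝ ι`.
  set g : ℝ → ι → ℝ := fun μ => u - μ • (A + μ • 1)⁻¹ *ᵥ u
  have hform : ∀ᶠ μ in 𝓝[>] 0,
      WithLp.toLp 2 (A *ᵥ u) - μ • WithLp.toLp 2 (g μ) =
        WithLp.toLp 2 ((A + μ • 1)⁻¹ *ᵥ (A *ᵥ (A *ᵥ u))) := by
    filter_upwards [self_mem_nhdsWithin] with μ hμ
    have hunit := (hA.posDef_add_smul_one hμ).isUnit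
    rw [inv_add_smul_one_mulVec_mulVec hunit, inv_add_smul_one_mulVec_mulVec hunit]
    simp [g]
  have hbound : ∀ᶠ μ in 𝓝[>] 0, ‖WithLp.toLp 2 (g μ)‖ ≤ 2 * ‖WithLp.toLp 2 u‖ := by
    filter_upwards [self_mem_nhdsWithin] with μ hμ
    calc ‖WithLp.toLp 2 (g μ)‖
        ≤ ‖WithLp.toLp 2 u‖ + ‖WithLp.toLp 2 (μ • (A + μ • 1)⁻¹ *ᵥ u)‖ := by
          rw [WithLp.toLp_sub]
          exact norm_sub_le _ _
      _ ≤ 2 * ‖WithLp.toLp 2 u‖ := by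
          linarith [hA.norm_smul_inv_add_smul_one_mulVec_le hμ u]
  have hsmul : Tendsto (fun μ : ℝ => μ • WithLp.toLp 2 (g μ)) (𝓝[>] 0) (𝓝 0) :=
    tendsto_nhdsWithin_of_tendsto_nhds tendsto_id |>.zero_smul_isBoundedUnder_le
      (isBoundedUnder_of_eventually_le hbound)
  have hlim := ((PiLp.continuous_ofLp 2 _).tendsto _).comp
    ((tendsto_const_nhds (x := WithLp.toLp 2 (A *ᵥ u))).sub hsmul |>.congr' hform)
  simpa [Function.comp_def] using hlim

end Ridge

end Matrix

theorem pooled_min_norm_interpolator_is_weighted_ridgeless_limit_general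
    (n₁ n₂ p : ℕ)
    (X1 : Matrix (Fin n₁) (Fin p) ℝ) (X2 : Matrix (Fin n₂) (Fin p) ℝ)
    (y1 : Fin n₁ → ℝ) (y2 : Fin n₂ → ℝ)
    (βhat : Fin p → ℝ)
    (hβmem : X1 *ᵥ βhat = y1 ∧ X2 *ᵥ βhat = y2)
    (hβmin : ∀ b : Fin p → ℝ, X1 *ᵥ b = y1 → X2 *ᵥ b = y2 →
      ∑ i, (βhat i) ^ 2 ≤ ∑ i, (b i) ^ 2)
    (w1 w2 : ℝ) (hw1 : 0 < w1) (hw2 : 0 < w2) (n : ℝ) (hn : 0 < n) :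
    (∀ lam : ℝ, 0 < lam →
      IsUnit (w1 • (X1ᵀ * X1) + w2 • (X2ᵀ * X2)
        + (n * lam) • (1 : Matrix (Fin p) (Fin p) ℝ))) ∧
    Tendsto (fun lam : ℝ =>
        (w1 • (X1ᵀ * X1) + w2 • (X2ᵀ * X2)
            + (n * lam) • (1 : Matrix (Fin p) (Fin p) ℝ))⁻¹ *ᵥ
          (w1 • (X1ᵀ *ᵥ y1) + w2 • (X2ᵀ *ᵥ y2)))
      (𝓝[>] (0 : ℝ)) (𝓝 βhat) := by
  set A := w1 • (X1ᵀ * X1) + w2 • (X2ᵀ * X2)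
  have hA1 := (posSemidef_transpose_mul_self X1).smul hw1.le
  have hA2 := (posSemidef_transpose_mul_self X2).smul hw2.le
  have hA : A.PosSemidef := hA1.add hA2
  have hrhs : w1 • (X1ᵀ *ᵥ y1) + w2 • (X2ᵀ *ᵥ y2) = A *ᵥ βhat := by
    rw [← hβmem.1, ← hβmem.2, add_mulVec, smul_mulVec, smul_mulVec, mulVec_mulVec, mulVec_mulVec]
  have horth : ∀ v, A *ᵥ v = 0 → v ⬝ᵥ βhat = 0 := by
    intro v hv
    have h1 := mulVec_eq_zero_of_smul_transpose_mul_self_mulVec_eq_zero hw1.ne'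
      (hA1.mulVec_eq_zero_of_add_mulVec_eq_zero hA2 hv)
    have h2 := mulVec_eq_zero_of_smul_transpose_mul_self_mulVec_eq_zero hw2.ne'
      (hA2.mulVec_eq_zero_of_add_mulVec_eq_zero hA1 (v := v) (by rw [add_comm]; exact hv))
    refine dotProduct_eq_zero_of_forall_dotProduct_self_le fun t => ?_
    simpa [dotProduct, sq] using hβmin (βhat + t • v)
      (by simp [mulVec_add, mulVec_smul, h1, hβmem.1])
      (by simp [mulVec_add, mulVec_smul, h2, hβmem.2])
  refine ⟨fun lam hlam => (hA.posDef_add_smul_one (mul_pos hn hlam)).isUnit, ?_⟩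
  rw [hrhs]
  exact (hA.tendsto_inv_add_smul_one_mulVec_mulVec horth).comp
    (tendsto_iff_comap.2 (comap_mulLeft_nhdsGT_zero hn).ge)

/-- The pooled min-ℓ₂-norm interpolator is the ridgeless limit of the
weighted pooled ridge estimator, for every choice of positive weights `w₁, w₂` and every
`n > 0`. -/
theorem pooled_min_norm_interpolator_is_weighted_ridgeless_limit
    (n₁ n₂ p : ℕ)
    (X1 : Matrix (Fin n₁) (Fin p) ℝ) (X2 : Matrix (Fin n₂) (Fin p) ℝ)
    (y1 : Fin n₁ → ℝ) (y2 : Fin n₂ → ℝ)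
    (hfeas : ∃ b : Fin p → ℝ, X1 *ᵥ b = y1 ∧ X2 *ᵥ b = y2)
    (βhat : Fin p → ℝ)
    (hβmem : X1 *ᵥ βhat = y1 ∧ X2 *ᵥ βhat = y2)
    (hβmin : ∀ b : Fin p → ℝ, X1 *ᵥ b = y1 → X2 *ᵥ b = y2 →
      ∑ i, (βhat i) ^ 2 ≤ ∑ i, (b i) ^ 2)
    (w1 w2 : ℝ) (hw1 : 0 < w1) (hw2 : 0 < w2) (n : ℝ) (hn : 0 < n) :
    (∀ lam : ℝ, 0 < lam →
      IsUnit (w1 • (X1ᵀ * X1) + w2 • (X2ᵀ * X2)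
        + (n * lam) • (1 : Matrix (Fin p) (Fin p) ℝ))) ∧
    Tendsto (fun lam : ℝ =>
        (w1 • (X1ᵀ * X1) + w2 • (X2ᵀ * X2)
            + (n * lam) • (1 : Matrix (Fin p) (Fin p) ℝ))⁻¹ *ᵥ
          (w1 • (X1ᵀ *ᵥ y1) + w2 • (X2ᵀ *ᵥ y2)))
      (𝓝[>] (0 : ℝ)) (𝓝 βhat) :=
  pooled_min_norm_interpolator_is_weighted_ridgeless_limit_general n₁ n₂ p X1 X2 y1 y2 βhat hβmem
    hβmin w1 w2 hw1 hw2 n hn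
end

section
/- Let p, n₁, n₂ be positive integers with n := n₁+n₂ < p, let σ² > 0, β⁽²⁾ ∈ ℝ^p with β⁽²⁾ ≠ 0, β̃ ∈ ℝ^p, and set SNR := ‖β⁽²⁾‖₂²/σ², SSR := ‖β̃‖₂²/‖β⁽²⁾‖₂². Define the limiting risks 𝓡_pool := σ²·n/(p−n) + ((p−n)/p)‖β⁽²⁾‖₂² + (n₁(p−n₁)/(p(p−n)))‖β̃‖₂² and 𝓡_tar := ((p−n₂)/p)‖β⁽²⁾‖₂² + (n₂/(p−n₂))σ², and set ρ := (p−n)/(p−n₁) − p²/((p−n₁)(p−n₂)·SNR). Then: (i) if SNR ≤ p²/((p−n)(p−n₂)) then 𝓡_tar ≤ 𝓡_pool; (ii) if SNR > p²/((p−n)(p−n₂)), then SSR ≥ ρ implies 𝓡_tar ≤ 𝓡_pool, and SSR < ρ implies 𝓡_pool ≤ 𝓡_tar. -/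
/-- Comparison of the limiting risks of the pooled and target-only
min-ℓ₂-norm interpolators under model shift. -/
theorem pooled_vs_target_limiting_risk_model_shift
    (p n₁ n₂ : ℕ) (hn₁ : 0 < n₁) (hn₂ : 0 < n₂) (hover : n₁ + n₂ < p)
    (σ2 : ℝ) (hσ : 0 < σ2)
    (β2 tβ : Fin p → ℝ) (hβ2 : β2 ≠ 0) :
    ∀ SNR SSR Rpool Rtar ρ : ℝ,
      SNR = (∑ i, (β2 i) ^ 2) / σ2 →
      SSR = (∑ i, (tβ i) ^ 2) / (∑ i, (β2 i) ^ 2) →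
      Rpool = σ2 * ((n₁ + n₂ : ℝ) / ((p : ℝ) - (n₁ + n₂ : ℝ)))
        + (((p : ℝ) - (n₁ + n₂ : ℝ)) / (p : ℝ)) * (∑ i, (β2 i) ^ 2)
        + ((n₁ : ℝ) * ((p : ℝ) - (n₁ : ℝ)) / ((p : ℝ) * ((p : ℝ) - (n₁ + n₂ : ℝ))))
            * (∑ i, (tβ i) ^ 2) →
      Rtar = (((p : ℝ) - (n₂ : ℝ)) / (p : ℝ)) * (∑ i, (β2 i) ^ 2)
        + ((n₂ : ℝ) / ((p : ℝ) - (n₂ : ℝ))) * σ2 →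
      ρ = ((p : ℝ) - (n₁ + n₂ : ℝ)) / ((p : ℝ) - (n₁ : ℝ))
        - (p : ℝ) ^ 2 / (((p : ℝ) - (n₁ : ℝ)) * ((p : ℝ) - (n₂ : ℝ)) * SNR) →
      -- (i) low SNR: pooling never helps
      (SNR ≤ (p : ℝ) ^ 2 / ((((p : ℝ) - (n₁ + n₂ : ℝ))) * ((p : ℝ) - (n₂ : ℝ))) →
        Rtar ≤ Rpool) ∧
      -- (ii) high SNR: threshold ρ on the shift-to-signal ratio
      ((p : ℝ) ^ 2 / ((((p : ℝ) - (n₁ + n₂ : ℝ))) * ((p : ℝ) - (n₂ : ℝ))) < SNR →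
        (ρ ≤ SSR → Rtar ≤ Rpool) ∧ (SSR < ρ → Rpool ≤ Rtar)) := by

  intro SNR SSR Rpool Rtar ρ hSNR hSSR hRpool hRtar hρ
  set B : ℝ := ∑ i, (β2 i) ^ 2 with hBdef
  set T : ℝ := ∑ i, (tβ i) ^ 2 with hTdef
  have hB : 0 < B := by
    obtain ⟨i, hi⟩ := Function.ne_iff.mp hβ2
    exact Finset.sum_pos' (fun j _ => sq_nonneg _)
      ⟨i, Finset.mem_univ i, by have := pow_pos (abs_pos.mpr hi) 2; rwa [sq_abs] at this⟩
  have hT : 0 ≤ T := Finset.sum_nonneg fun j _ => sq_nonneg _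
  have hp : (0:ℝ) < p := by exact_mod_cast hn₁.trans (lt_of_le_of_lt (Nat.le_add_right _ _) hover)
  have hn : ((n₁:ℝ) + n₂) < p := by exact_mod_cast hover
  have hpn : (0:ℝ) < (p:ℝ) - ((n₁:ℝ) + n₂) := by linarith
  have hpn1 : (0:ℝ) < (p:ℝ) - (n₁:ℝ) := by
    have : (0:ℝ) < (n₂:ℝ) := by exact_mod_cast hn₂
    linarith
  have hpn2 : (0:ℝ) < (p:ℝ) - (n₂:ℝ) := by
    have : (0:ℝ) < (n₁:ℝ) := by exact_mod_cast hn₁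
    linarith
  have hn1pos : (0:ℝ) < (n₁:ℝ) := by exact_mod_cast hn₁
  have hSNRpos : 0 < SNR := by rw [hSNR]; positivity
  have key : Rpool - Rtar
      = ((n₁:ℝ) * ((p:ℝ) - (n₁:ℝ)) * B / ((p:ℝ) * ((p:ℝ) - ((n₁:ℝ) + n₂)))) * (SSR - ρ) := by
    subst hSNR hSSR hRpool hRtar hρ
    field_simp
    ring
  have hK : 0 < (n₁:ℝ) * ((p:ℝ) - (n₁:ℝ)) * B / ((p:ℝ) * ((p:ℝ) - ((n₁:ℝ) + n₂))) := by
    positivity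
  constructor
  · intro hlow
    have h1 : SNR * (((p:ℝ) - ((n₁:ℝ) + n₂)) * ((p:ℝ) - (n₂:ℝ))) ≤ (p:ℝ) ^ 2 :=
      (le_div_iff₀ (by positivity)).mp hlow
    have hρle : ρ ≤ 0 := by
      rw [hρ, sub_nonpos, div_le_div_iff₀ hpn1 (by positivity)]
      nlinarith
    have hSSRnn : 0 ≤ SSR := by rw [hSSR]; positivity
    have := mul_nonneg hK.le (by linarith : (0:ℝ) ≤ SSR - ρ)
    linarith [key]
  · intro _
    constructor
    · intro h
      have := mul_nonneg hK.le (by linarith : (0:ℝ) ≤ SSR - ρ)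
      linarith [key]
    · intro h
      have := mul_nonpos_of_nonneg_of_nonpos hK.le (by linarith : SSR - ρ ≤ 0)
      linarith [key]
end

section
/- Let p, n₁ be positive integers with n₁ < p, σ² > 0, β⁽²⁾ ∈ ℝ^p with β⁽²⁾ ≠ 0, β̃ ∈ ℝ^p, SNR := ‖β⁽²⁾‖₂²/σ², SSR := ‖β̃‖₂²/‖β⁽²⁾‖₂². For a real variable n₂ ∈ [0, p−n₁) define 𝓡(n₂) := σ²·(n₁+n₂)/(p−n₁−n₂) + ((p−n₁−n₂)/p)‖β⁽²⁾‖₂² + (n₁(p−n₁)/(p(p−n₁−n₂)))‖β̃‖₂². Then 𝓡 is strictly convex on [0, p−n₁) and attains its minimum over [0, p−n₁) at the unique point n₂* := max{0, p − n₁ − √(p²/SNR + n₁(p−n₁)·SSR)}. -/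
/-!
Writing `m = p − n₁` and `u = m − n₂`, the risk is `C / u + D u − σ²` with
`C = σ² p + n₁ m ‖β̃‖² / p > 0` and `D = ‖β⁽²⁾‖² / p > 0`, a strictly convex function of `u > 0`.
By AM–GM it is minimised at `u = √(C / D)`, and it decreases on `(0, √(C / D)]`; hence over
`u ∈ (0, m]` the minimiser is `min m √(C / D)`, i.e. `n₂* = max 0 (m − √(C / D))`, and
`p² / SNR + n₁ m SSR` is exactly `C / D`.
-/

open Set

lemma strictConvexOn_div_sub_add_mul_sub {C : ℝ} (hC : 0 < C) (D m k : ℝ) :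
    StrictConvexOn ℝ (Iio m) fun x => C / (m - x) + D * (m - x) - k := by
  refine ⟨convex_Iio m, fun x hx y hy hxy a b ha hb hab => ?_⟩
  obtain rfl : b = 1 - a := by linarith
  have hu : 0 < m - x := sub_pos.mpr hx
  have hw : 0 < m - y := sub_pos.mpr hy
  have hmz : m - (a * x + (1 - a) * y) = a * (m - x) + (1 - a) * (m - y) := by ring
  simp only [smul_eq_mul, hmz]
  set u := m - x
  set w := m - y
  have huw : 0 < (u - w) ^ 2 := by
    have : u - w ≠ 0 := fun h => hxy (by linarith)
    positivity
  have hgap : a * (C / u + D * u - k) + (1 - a) * (C / w + D * w - k)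
      - (C / (a * u + (1 - a) * w) + D * (a * u + (1 - a) * w) - k)
      = C * a * (1 - a) * (u - w) ^ 2 / (u * w * (a * u + (1 - a) * w)) := by
    field_simp
    ring
  have : 0 < C * a * (1 - a) * (u - w) ^ 2 / (u * w * (a * u + (1 - a) * w)) := by positivity
  linarith

lemma div_add_mul_le_of_eq_mul_sq {C D s u : ℝ} (hD : 0 ≤ D) (hu : 0 < u)
    (hC : C = D * s ^ 2) : C / s + D * s ≤ C / u + D * u := by
  have hgap : C / u + D * u - (C / s + D * s) = D * (u - s) ^ 2 / u := by
    subst hC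
    field_simp
    ring
  have : 0 ≤ D * (u - s) ^ 2 / u := by positivity
  linarith

lemma div_add_mul_le_of_mul_le {C D u v : ℝ} (hu : 0 < u) (huv : u ≤ v) (h : D * u * v ≤ C) :
    C / v + D * v ≤ C / u + D * u := by
  have hv : 0 < v := hu.trans_le huv
  have hgap : C / u + D * u - (C / v + D * v) = (v - u) * (C - D * u * v) / (u * v) := by
    field_simp
    ring
  have : 0 ≤ (v - u) * (C - D * u * v) / (u * v) :=
    div_nonneg (mul_nonneg (sub_nonneg.mpr huv) (sub_nonneg.mpr h)) (by positivity)
  linarith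

lemma max_zero_sub_mem_Ico {m s : ℝ} (hm : 0 < m) (hs : 0 < s) : max 0 (m - s) ∈ Ico 0 m :=
  ⟨le_max_left _ _, max_lt hm (by linarith)⟩

lemma isMinOn_div_sub_add_mul_sub {C D m : ℝ} (hC : 0 < C) (hD : 0 < D) (k : ℝ) :
    IsMinOn (fun x => C / (m - x) + D * (m - x) - k) (Ico 0 m) (max 0 (m - √(C / D))) := by
  intro x ⟨hx0, hxm⟩
  set s := √(C / D)
  have hs : 0 < s := Real.sqrt_pos.mpr (div_pos hC hD)
  have hCs : C = D * s ^ 2 := by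
    rw [Real.sq_sqrt (div_pos hC hD).le]
    field_simp
  have hu : 0 < m - x := sub_pos.mpr hxm
  suffices C / (m - max 0 (m - s)) + D * (m - max 0 (m - s)) ≤ C / (m - x) + D * (m - x) by
    simpa using this
  rcases le_or_gt s m with hsm | hms
  · rw [max_eq_right (by linarith), sub_sub_cancel]
    exact div_add_mul_le_of_eq_mul_sq hD.le hu hCs
  · rw [max_eq_left (by linarith), sub_zero]
    refine div_add_mul_le_of_mul_le hu (by linarith) ?_
    rw [hCs, mul_assoc]
    gcongr
    nlinarith

lemma pooled_risk_eq (σ2 p n B T x : ℝ) (hp : p ≠ 0) (hx : p - n - x ≠ 0) :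
    σ2 * ((n + x) / (p - n - x)) + ((p - n - x) / p) * B + (n * (p - n) / (p * (p - n - x))) * T
      = (σ2 * p + n * (p - n) * T / p) / (p - n - x) + B / p * (p - n - x) - σ2 := by
  field_simp
  ring

lemma sq_div_snr_add_mul_ssr (σ2 p n B T : ℝ) (hp : p ≠ 0) (hB : B ≠ 0) :
    p ^ 2 / (B / σ2) + n * (p - n) * (T / B) = (σ2 * p + n * (p - n) * T / p) / (B / p) := by
  field_simp

theorem optimal_target_sample_size_general
    (p n₁ : ℕ) (hover : n₁ < p)
    (σ2 : ℝ) (hσ : 0 < σ2)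
    (β2 tβ : Fin p → ℝ) (hβ2 : β2 ≠ 0) :
    ∀ (SNR SSR : ℝ) (R : ℝ → ℝ) (nstar : ℝ),
      SNR = (∑ i, (β2 i) ^ 2) / σ2 →
      SSR = (∑ i, (tβ i) ^ 2) / (∑ i, (β2 i) ^ 2) →
      R = (fun x : ℝ =>
        σ2 * (((n₁ : ℝ) + x) / ((p : ℝ) - (n₁ : ℝ) - x))
        + (((p : ℝ) - (n₁ : ℝ) - x) / (p : ℝ)) * (∑ i, (β2 i) ^ 2)
        + ((n₁ : ℝ) * ((p : ℝ) - (n₁ : ℝ)) / ((p : ℝ) * ((p : ℝ) - (n₁ : ℝ) - x)))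
            * (∑ i, (tβ i) ^ 2)) →
      nstar = max 0 ((p : ℝ) - (n₁ : ℝ)
        - Real.sqrt ((p : ℝ) ^ 2 / SNR + (n₁ : ℝ) * ((p : ℝ) - (n₁ : ℝ)) * SSR)) →
      StrictConvexOn ℝ (Set.Ico (0 : ℝ) ((p : ℝ) - (n₁ : ℝ))) R ∧
      nstar ∈ Set.Ico (0 : ℝ) ((p : ℝ) - (n₁ : ℝ)) ∧
      (∀ x ∈ Set.Ico (0 : ℝ) ((p : ℝ) - (n₁ : ℝ)), R nstar ≤ R x) ∧
      (∀ x ∈ Set.Ico (0 : ℝ) ((p : ℝ) - (n₁ : ℝ)), R x = R nstar → x = nstar) := by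
  intro SNR SSR R nstar hSNR hSSR hR hnstar
  set B := ∑ i, (β2 i) ^ 2
  set T := ∑ i, (tβ i) ^ 2
  set m : ℝ := (p : ℝ) - n₁
  set C : ℝ := σ2 * p + n₁ * m * T / p
  set D : ℝ := B / p
  have hB : 0 < B := by
    obtain ⟨i, hi⟩ := Function.ne_iff.mp hβ2
    exact Finset.sum_pos' (fun j _ => sq_nonneg _) ⟨i, Finset.mem_univ i, pow_two_pos_of_ne_zero hi⟩
  have hT : 0 ≤ T := Finset.sum_nonneg fun j _ => sq_nonneg _
  have hp : (0 : ℝ) < p := by exact_mod_cast (Nat.zero_le n₁).trans_lt hover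
  have hm : 0 < m := sub_pos.mpr (by exact_mod_cast hover)
  have hC : 0 < C := by positivity
  have hD : 0 < D := by positivity
  have hR_eq : EqOn (fun x => C / (m - x) + D * (m - x) - σ2) R (Ico 0 m) := fun x hx => by
    subst hR
    exact (pooled_risk_eq σ2 p n₁ B T x hp.ne' (sub_pos.mpr hx.2).ne').symm
  rw [hSNR, hSSR, sq_div_snr_add_mul_ssr σ2 p n₁ B T hp.ne' hB.ne'] at hnstar
  subst hnstar
  have hconv : StrictConvexOn ℝ (Ico 0 m) R :=
    ((strictConvexOn_div_sub_add_mul_sub hC D m σ2).subset Ico_subset_Iio_self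
      (convex_Ico 0 m)).congr hR_eq
  have hmem := max_zero_sub_mem_Ico hm (Real.sqrt_pos.mpr (div_pos hC hD))
  have hmin : IsMinOn R (Ico 0 m) (max 0 (m - √(C / D))) :=
    (isMinOn_div_sub_add_mul_sub hC hD σ2).congr (Filter.eventuallyEq_principal.mpr hR_eq)
      (hR_eq hmem)
  exact ⟨hconv, hmem, fun x hx => hmin hx,
    fun x hx hx_eq => hconv.eq_of_isMinOn (fun y hy => hx_eq ▸ hmin hy) hmin hx hmem⟩

/-- The limiting pooled-interpolator risk, as a function of a real target
sample size `n₂ ∈ [0, p−n₁)`, is strictly convex and is minimized at the unique point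
`n₂* = max{0, p − n₁ − √(p²/SNR + n₁(p−n₁)·SSR)}`. -/
theorem optimal_target_sample_size
    (p n₁ : ℕ) (hn₁ : 0 < n₁) (hover : n₁ < p)
    (σ2 : ℝ) (hσ : 0 < σ2)
    (β2 tβ : Fin p → ℝ) (hβ2 : β2 ≠ 0) :
    ∀ (SNR SSR : ℝ) (R : ℝ → ℝ) (nstar : ℝ),
      SNR = (∑ i, (β2 i) ^ 2) / σ2 →
      SSR = (∑ i, (tβ i) ^ 2) / (∑ i, (β2 i) ^ 2) →
      R = (fun x : ℝ =>
        σ2 * (((n₁ : ℝ) + x) / ((p : ℝ) - (n₁ : ℝ) - x))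
        + (((p : ℝ) - (n₁ : ℝ) - x) / (p : ℝ)) * (∑ i, (β2 i) ^ 2)
        + ((n₁ : ℝ) * ((p : ℝ) - (n₁ : ℝ)) / ((p : ℝ) * ((p : ℝ) - (n₁ : ℝ) - x)))
            * (∑ i, (tβ i) ^ 2)) →
      nstar = max 0 ((p : ℝ) - (n₁ : ℝ)
        - Real.sqrt ((p : ℝ) ^ 2 / SNR + (n₁ : ℝ) * ((p : ℝ) - (n₁ : ℝ)) * SSR)) →
      StrictConvexOn ℝ (Set.Ico (0 : ℝ) ((p : ℝ) - (n₁ : ℝ))) R ∧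
      nstar ∈ Set.Ico (0 : ℝ) ((p : ℝ) - (n₁ : ℝ)) ∧
      (∀ x ∈ Set.Ico (0 : ℝ) ((p : ℝ) - (n₁ : ℝ)), R nstar ≤ R x) ∧
      (∀ x ∈ Set.Ico (0 : ℝ) ((p : ℝ) - (n₁ : ℝ)), R x = R nstar → x = nstar) :=
  optimal_target_sample_size_general p n₁ hover σ2 hσ β2 tβ hβ2
end

section
/- Let p be an even positive integer, and let n₁, n₂ be positive integers with n := n₁+n₂ < p. Let λ₁,…,λ_{p/2} > 0. Then the function a ↦ Σ_{i=1}^{p/2}[1/(a(p−n)λ_i + p−n₁) + 1/(a(p−n)/λ_i + p−n₁)] is strictly decreasing on (0,∞), and there is a unique ã₁ > 0 at which it equals 1 provided its value at a = 0, namely p/(p−n₁), exceeds 1 (which holds since n₁ ≥ 1). Moreover: if n₁ ≤ p/2 then ã₁ ≤ n₁/(p−n), and if n₁ ≥ p/2 then ã₁ ≥ n₁/(p−n). Consequently, the limiting risk σ²(ã₁ + n₂/(p−n)) + ((p−n)/p)‖β⁽²⁾‖₂² of the pooled min-ℓ₂-norm interpolator when the source covariance has reciprocal eigenvalue pairs λ_i,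 1/λ_i and the target covariance is I is at most (respectively, at least) the no-shift limiting risk σ²n/(p−n) + ((p−n)/p)‖β⁽²⁾‖₂² when n₁ ≤ p/2 (respectively, p/2 ≤ n₁ < p−n₂). -/
/-!
Write `c = p - n`, `d = p - n₁` and `x = a c`. A reciprocal pair `λ, 1/λ` contributes
`1/(xλ + d) + 1/(x/λ + d)`, which is strictly decreasing in `x`, tends to `0`, and differs from
its value `2/(x + d)` at `λ = 1` by `x (λ - 1)² (d - x) / ((x + d)(xλ + d)(x + dλ))`.
At `x = n₁` we have `x + d = p`, so the whole sum is `≤ 1` when `n₁ ≤ p/2` and `≥ 1` when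
`n₁ ≥ p/2`; monotonicity places the root `ã₁` on the corresponding side of `n₁/(p - n)`, and the
root exists by the intermediate value theorem since the sum starts at `p/(p - n₁) > 1`.
-/

open Set Filter Topology

section ReciprocalPair

variable {K l x : ℝ}

noncomputable def reciprocalPairSum (K l x : ℝ) : ℝ := 1 / (x * l + K) + 1 / (x / l + K)

lemma two_div_sub_reciprocalPairSum (hK : 0 < K) (hl : 0 < l) (hx : 0 ≤ x) :
    2 / (x + K) - reciprocalPairSum K l x
      = x * (l - 1) ^ 2 * (K - x) / ((x + K) * (x * l + K) * (x + K * l)) := by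
  have hxl : x / l + K = (x + K * l) / l := by field_simp
  have : 0 < x * l + K := by positivity
  have : 0 < x + K * l := by positivity
  rw [reciprocalPairSum, hxl]
  field_simp
  ring

lemma reciprocalPairSum_le_two_div (hK : 0 < K) (hl : 0 < l) (hx : 0 ≤ x) (hxK : x ≤ K) :
    reciprocalPairSum K l x ≤ 2 / (x + K) := by
  have h := two_div_sub_reciprocalPairSum hK hl hx
  have : 0 ≤ x * (l - 1) ^ 2 * (K - x) / ((x + K) * (x * l + K) * (x + K * l)) := by
    have := sub_nonneg.2 hxK
    positivity
  linarith

lemma two_div_le_reciprocalPairSum (hK : 0 < K) (hl : 0 < l) (hKx : K ≤ x) :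
    2 / (x + K) ≤ reciprocalPairSum K l x := by
  have hx : 0 ≤ x := hK.le.trans hKx
  have h := two_div_sub_reciprocalPairSum hK hl hx
  have : x * (l - 1) ^ 2 * (K - x) / ((x + K) * (x * l + K) * (x + K * l)) ≤ 0 :=
    div_nonpos_of_nonpos_of_nonneg
      (mul_nonpos_of_nonneg_of_nonpos (by positivity) (sub_nonpos.2 hKx)) (by positivity)
  linarith

lemma strictAntiOn_reciprocalPairSum (hK : 0 < K) (hl : 0 < l) :
    StrictAntiOn (reciprocalPairSum K l) (Ici 0) := by
  intro x hx y hy hxy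
  have hx : (0 : ℝ) ≤ x := hx
  unfold reciprocalPairSum
  gcongr

lemma continuousOn_reciprocalPairSum (hK : 0 < K) (hl : 0 < l) :
    ContinuousOn (reciprocalPairSum K l) (Ici 0) := by
  unfold reciprocalPairSum
  fun_prop (disch := intro x hx; have : (0 : ℝ) ≤ x := hx; positivity)

lemma tendsto_reciprocalPairSum_atTop (hl : 0 < l) :
    Tendsto (reciprocalPairSum K l) atTop (𝓝 0) := by
  have h₁ : Tendsto (fun x => x * l + K) atTop atTop :=
    tendsto_atTop_add_const_right _ K (tendsto_id.atTop_mul_const hl)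
  have h₂ : Tendsto (fun x => x / l + K) atTop atTop :=
    tendsto_atTop_add_const_right _ K (tendsto_id.atTop_div_const hl)
  have h := ((tendsto_const_nhds (x := (1 : ℝ))).div_atTop h₁).add
    ((tendsto_const_nhds (x := (1 : ℝ))).div_atTop h₂)
  rwa [add_zero] at h

end ReciprocalPair

section ReciprocalPairs

variable {ι : Type*} [Fintype ι] {K c : ℝ} {lam : ι → ℝ}

noncomputable def reciprocalPairsSum (K c : ℝ) (lam : ι → ℝ) (a : ℝ) : ℝ :=
  ∑ i, reciprocalPairSum K (lam i) (a * c)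

lemma reciprocalPairsSum_zero : reciprocalPairsSum K c lam 0 = Fintype.card ι * (2 / K) := by
  simp [reciprocalPairsSum, reciprocalPairSum]
  ring

lemma strictAntiOn_reciprocalPairsSum [Nonempty ι] (hK : 0 < K) (hc : 0 < c)
    (hlam : ∀ i, 0 < lam i) : StrictAntiOn (reciprocalPairsSum K c lam) (Ici 0) := by
  intro a ha b hb hab
  refine Finset.sum_lt_sum_of_nonempty Finset.univ_nonempty fun i _ => ?_
  have ha : (0 : ℝ) ≤ a := ha
  have hb : (0 : ℝ) ≤ b := hb
  exact strictAntiOn_reciprocalPairSum hK (hlam i) (by simp; positivity) (by simp; positivity)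
    (by gcongr)

lemma continuousOn_reciprocalPairsSum (hK : 0 < K) (hc : 0 < c) (hlam : ∀ i, 0 < lam i) :
    ContinuousOn (reciprocalPairsSum K c lam) (Ici 0) := by
  refine continuousOn_finsetSum _ fun i _ => ?_
  refine (continuousOn_reciprocalPairSum hK (hlam i)).comp (by fun_prop) fun a ha => ?_
  have ha : (0 : ℝ) ≤ a := ha
  simp only [mem_Ici]
  positivity

lemma tendsto_reciprocalPairsSum_atTop (hc : 0 < c) (hlam : ∀ i, 0 < lam i) :
    Tendsto (reciprocalPairsSum K c lam) atTop (𝓝 0) := by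
  have h := tendsto_finsetSum Finset.univ fun i _ =>
    (tendsto_reciprocalPairSum_atTop (K := K) (hlam i)).comp (tendsto_id.atTop_mul_const hc)
  rwa [Finset.sum_const_zero] at h

lemma reciprocalPairsSum_le (hK : 0 < K) (hc : 0 < c) (hlam : ∀ i, 0 < lam i) {a : ℝ}
    (ha : 0 ≤ a) (haK : a * c ≤ K) :
    reciprocalPairsSum K c lam a ≤ Fintype.card ι * (2 / (a * c + K)) := by
  calc reciprocalPairsSum K c lam a ≤ ∑ _i : ι, 2 / (a * c + K) :=
        Finset.sum_le_sum fun i _ => reciprocalPairSum_le_two_div hK (hlam i) (by positivity) haK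
    _ = Fintype.card ι * (2 / (a * c + K)) := by simp

lemma le_reciprocalPairsSum (hK : 0 < K) (hlam : ∀ i, 0 < lam i) {a : ℝ} (haK : K ≤ a * c) :
    Fintype.card ι * (2 / (a * c + K)) ≤ reciprocalPairsSum K c lam a := by
  calc Fintype.card ι * (2 / (a * c + K)) = ∑ _i : ι, 2 / (a * c + K) := by simp
    _ ≤ reciprocalPairsSum K c lam a :=
        Finset.sum_le_sum fun i _ => two_div_le_reciprocalPairSum hK (hlam i) haK

end ReciprocalPairs

lemma existsUnique_pos_eq_of_strictAntiOn {g : ℝ → ℝ} {L y : ℝ}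
    (hanti : StrictAntiOn g (Ici 0)) (hcont : ContinuousOn g (Ici 0))
    (hlim : Tendsto g atTop (𝓝 L)) (hL : L < y) (hy : y < g 0) :
    ∃! a, 0 < a ∧ g a = y := by
  obtain ⟨A, hgA, hA⟩ := ((hlim.eventually (gt_mem_nhds hL)).and (eventually_ge_atTop 0)).exists
  obtain ⟨a, ha, hga⟩ := intermediate_value_Icc' hA (hcont.mono Icc_subset_Ici_self)
    ⟨hgA.le, hy.le⟩
  have ha₀ : 0 < a := ha.1.lt_of_ne <| by rintro rfl; exact hy.ne' hga
  refine ⟨a, ⟨ha₀, hga⟩, fun b ⟨hb, hgb⟩ => ?_⟩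
  exact hanti.injOn (mem_Ici.2 hb.le) (mem_Ici.2 ha₀.le) (hgb.trans hga.symm)

theorem covariate_shift_reciprocal_pairs_sample_size_dichotomy_general
    (m n₁ n₂ : ℕ) (hn₁ : 0 < n₁)
    (hover : n₁ + n₂ < 2 * m)
    (lam : Fin m → ℝ) (hlam : ∀ i, 0 < lam i)
    (σ2 : ℝ) (hσ : 0 < σ2) (β2 : Fin (2 * m) → ℝ) :
    ∀ f : ℝ → ℝ,
      f = (fun a =>
        ∑ i, (1 / (a * ((2 * m : ℝ) - ((n₁ : ℝ) + (n₂ : ℝ))) * lam i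
                + ((2 * m : ℝ) - (n₁ : ℝ)))
          + 1 / (a * ((2 * m : ℝ) - ((n₁ : ℝ) + (n₂ : ℝ))) / lam i
                + ((2 * m : ℝ) - (n₁ : ℝ))))) →
      StrictAntiOn f (Set.Ioi (0 : ℝ)) ∧
      1 < (2 * m : ℝ) / ((2 * m : ℝ) - (n₁ : ℝ)) ∧
      (∃! a : ℝ, 0 < a ∧ f a = 1) ∧
      (∀ a : ℝ, 0 < a → f a = 1 →
        (n₁ ≤ m →
          a ≤ (n₁ : ℝ) / ((2 * m : ℝ) - ((n₁ : ℝ) + (n₂ : ℝ))) ∧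
          σ2 * (a + (n₂ : ℝ) / ((2 * m : ℝ) - ((n₁ : ℝ) + (n₂ : ℝ))))
              + (((2 * m : ℝ) - ((n₁ : ℝ) + (n₂ : ℝ))) / (2 * m : ℝ))
                * (∑ i, (β2 i) ^ 2)
            ≤ σ2 * (((n₁ : ℝ) + (n₂ : ℝ)) / ((2 * m : ℝ) - ((n₁ : ℝ) + (n₂ : ℝ))))
              + (((2 * m : ℝ) - ((n₁ : ℝ) + (n₂ : ℝ))) / (2 * m : ℝ))
                * (∑ i, (β2 i) ^ 2)) ∧
        (m ≤ n₁ →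
          (n₁ : ℝ) / ((2 * m : ℝ) - ((n₁ : ℝ) + (n₂ : ℝ))) ≤ a ∧
          σ2 * (((n₁ : ℝ) + (n₂ : ℝ)) / ((2 * m : ℝ) - ((n₁ : ℝ) + (n₂ : ℝ))))
              + (((2 * m : ℝ) - ((n₁ : ℝ) + (n₂ : ℝ))) / (2 * m : ℝ))
                * (∑ i, (β2 i) ^ 2)
            ≤ σ2 * (a + (n₂ : ℝ) / ((2 * m : ℝ) - ((n₁ : ℝ) + (n₂ : ℝ))))
              + (((2 * m : ℝ) - ((n₁ : ℝ) + (n₂ : ℝ))) / (2 * m : ℝ))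
                * (∑ i, (β2 i) ^ 2))) := by
  intro f hf
  have hoverR : (n₁ : ℝ) + n₂ < 2 * m := by exact_mod_cast hover
  have hn₁R : (0 : ℝ) < n₁ := by exact_mod_cast hn₁
  set c : ℝ := 2 * m - (n₁ + n₂)
  set d : ℝ := 2 * m - n₁
  have hc : 0 < c := sub_pos.2 hoverR
  have hd : 0 < d := by linarith [n₂.cast_nonneg (α := ℝ)]
  replace hf : f = reciprocalPairsSum d c lam := hf
  subst hf
  have : Nonempty (Fin m) := ⟨⟨0, by omega⟩⟩
  have hanti := strictAntiOn_reciprocalPairsSum hd hc hlam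
  have hone_lt : 1 < 2 * m / d := by rw [one_lt_div hd]; linarith
  have hf₀ : reciprocalPairsSum d c lam 0 = 2 * m / d := by
    rw [reciprocalPairsSum_zero, Fintype.card_fin]; ring
  have hstar : (0 : ℝ) ≤ n₁ / c := by positivity
  have hstar_pair : (Fintype.card (Fin m) : ℝ) * (2 / (n₁ / c * c + d)) = 1 := by
    have : (m : ℝ) ≠ 0 := by linarith
    rw [div_mul_cancel₀ _ hc.ne', Fintype.card_fin]
    field_simp
    ring
  refine ⟨hanti.mono Ioi_subset_Ici_self, hone_lt,
    existsUnique_pos_eq_of_strictAntiOn hanti (continuousOn_reciprocalPairsSum hd hc hlam)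
      (tendsto_reciprocalPairsSum_atTop hc hlam) one_pos (hf₀ ▸ hone_lt),
    fun a ha hfa => ⟨fun hle => ?_, fun hge => ?_⟩⟩
  · have hle' : a ≤ n₁ / c := by
      refine (hanti.le_iff_ge hstar ha.le).1 ?_
      rw [hfa, ← hstar_pair]
      refine reciprocalPairsSum_le hd hc hlam hstar ?_
      rw [div_mul_cancel₀ _ hc.ne']
      linarith [(Nat.cast_le (α := ℝ)).2 hle]
    refine ⟨hle', ?_⟩
    rw [add_div]
    gcongr
  · have hge' : n₁ / c ≤ a := by
      refine (hanti.le_iff_ge ha.le hstar).1 ?_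
      rw [hfa, ← hstar_pair]
      refine le_reciprocalPairsSum hd hlam ?_
      rw [div_mul_cancel₀ _ hc.ne']
      linarith [(Nat.cast_le (α := ℝ)).2 hge]
    refine ⟨hge', ?_⟩
    rw [add_div]
    gcongr

/-- Covariate shift with reciprocal-pair source eigenvalues and identity
target covariance: the defining function of `ã₁` is strictly decreasing, has a unique
positive root, and heterogeneity helps (resp. hurts) the pooled min-ℓ₂-norm interpolator
according to whether `n₁ ≤ p/2` (resp. `n₁ ≥ p/2`). Here `p = 2m`. -/
theorem covariate_shift_reciprocal_pairs_sample_size_dichotomy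
    (m n₁ n₂ : ℕ) (hm : 0 < m) (hn₁ : 0 < n₁) (hn₂ : 0 < n₂)
    (hover : n₁ + n₂ < 2 * m)
    (lam : Fin m → ℝ) (hlam : ∀ i, 0 < lam i)
    (σ2 : ℝ) (hσ : 0 < σ2) (β2 : Fin (2 * m) → ℝ) :
    ∀ f : ℝ → ℝ,
      f = (fun a =>
        ∑ i, (1 / (a * ((2 * m : ℝ) - ((n₁ : ℝ) + (n₂ : ℝ))) * lam i
                + ((2 * m : ℝ) - (n₁ : ℝ)))
          + 1 / (a * ((2 * m : ℝ) - ((n₁ : ℝ) + (n₂ : ℝ))) / lam i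
                + ((2 * m : ℝ) - (n₁ : ℝ))))) →
      StrictAntiOn f (Set.Ioi (0 : ℝ)) ∧
      1 < (2 * m : ℝ) / ((2 * m : ℝ) - (n₁ : ℝ)) ∧
      (∃! a : ℝ, 0 < a ∧ f a = 1) ∧
      (∀ a : ℝ, 0 < a → f a = 1 →
        (n₁ ≤ m →
          a ≤ (n₁ : ℝ) / ((2 * m : ℝ) - ((n₁ : ℝ) + (n₂ : ℝ))) ∧
          σ2 * (a + (n₂ : ℝ) / ((2 * m : ℝ) - ((n₁ : ℝ) + (n₂ : ℝ))))
              + (((2 * m : ℝ) - ((n₁ : ℝ) + (n₂ : ℝ))) / (2 * m : ℝ))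
                * (∑ i, (β2 i) ^ 2)
            ≤ σ2 * (((n₁ : ℝ) + (n₂ : ℝ)) / ((2 * m : ℝ) - ((n₁ : ℝ) + (n₂ : ℝ))))
              + (((2 * m : ℝ) - ((n₁ : ℝ) + (n₂ : ℝ))) / (2 * m : ℝ))
                * (∑ i, (β2 i) ^ 2)) ∧
        (m ≤ n₁ →
          (n₁ : ℝ) / ((2 * m : ℝ) - ((n₁ : ℝ) + (n₂ : ℝ))) ≤ a ∧
          σ2 * (((n₁ : ℝ) + (n₂ : ℝ)) / ((2 * m : ℝ) - ((n₁ : ℝ) + (n₂ : ℝ))))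
              + (((2 * m : ℝ) - ((n₁ : ℝ) + (n₂ : ℝ))) / (2 * m : ℝ))
                * (∑ i, (β2 i) ^ 2)
            ≤ σ2 * (a + (n₂ : ℝ) / ((2 * m : ℝ) - ((n₁ : ℝ) + (n₂ : ℝ))))
              + (((2 * m : ℝ) - ((n₁ : ℝ) + (n₂ : ℝ))) / (2 * m : ℝ))
                * (∑ i, (β2 i) ^ 2))) :=
  covariate_shift_reciprocal_pairs_sample_size_dichotomy_general m n₁ n₂ hn₁ hover lam hlam σ2 hσ β2
end

section
/- Let p, n₁, n₂ be positive integers with n := n₁+n₂ < p. For κ ≥ 1 let a(κ) be the unique positive root of the quadratic 2a²(p−n)² + a(p−n)(p−2n₁)(κ + 1/κ) − 2n₁(p−n₁) = 0 (such a positive root exists and is unique since the constant term is negative). Then: (i) if n₁ < p/2, the map κ ↦ a(κ) is nonincreasing on [1,∞), i.e. a(κ₁) ≤ a(κ₂) whenever κ₁ > κ₂ ≥ 1; (ii) if n₁ > p/2, the map κ ↦ a(κ) is nondecreasing on [1,∞); (iii) if n₁ = p/2, a(κ) is the same for all κ ≥ 1. -/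
set_option maxHeartbeats 1000000

private lemma quad_exists (A B C : ℝ) (hA : 0 < A) (hC : 0 < C) :
    ∃ a : ℝ, 0 < a ∧ A * a ^ 2 + B * a - C = 0 := by
  set s := Real.sqrt (B ^ 2 + 4 * A * C) with hs
  have hsnn : 0 ≤ s := Real.sqrt_nonneg _
  have hs2 : s ^ 2 = B ^ 2 + 4 * A * C := Real.sq_sqrt (by positivity)
  have hBs : B < s := by nlinarith [mul_pos hA hC, sq_nonneg (B - s)]
  refine ⟨(-B + s) / (2 * A), div_pos (by linarith) (by linarith), ?_⟩
  have hA' : (2 * A) ≠ 0 := by positivity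
  field_simp
  nlinarith [hs2]

private lemma quad_le (A B C a x : ℝ) (hA : 0 < A) (hC : 0 < C) (ha : 0 < a)
    (ea : A * a ^ 2 + B * a - C = 0) (hx : 0 < x)
    (hle : A * x ^ 2 + B * x - C ≤ 0) : x ≤ a := by
  by_contra h
  push_neg at h
  have h2 : 0 < A * (x + a) + B := by
    nlinarith [mul_pos hA (mul_pos ha hx)]
  nlinarith [mul_pos (sub_pos.2 h) h2]

private lemma quad_unique (A B C a b : ℝ) (hA : 0 < A) (hC : 0 < C)
    (ha : 0 < a) (ea : A * a ^ 2 + B * a - C = 0)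
    (hb : 0 < b) (eb : A * b ^ 2 + B * b - C = 0) : a = b :=
  le_antisymm (quad_le A B C b a hA hC hb eb ha ea.le)
    (quad_le A B C a b hA hC ha ea hb eb.le)

private lemma t_mono {a b : ℝ} (hb : 1 ≤ b) (hba : b ≤ a) :
    b + 1 / b ≤ a + 1 / a := by
  have hb0 : 0 < b := by linarith
  have ha0 : 0 < a := by linarith
  have key : b + 1 / b - (a + 1 / a) = (b - a) * (a * b - 1) / (a * b) := by
    field_simp
    ring
  have hab : 1 ≤ a * b := by nlinarith [mul_nonneg (by linarith : (0:ℝ) ≤ a - 1) (by linarith : (0:ℝ) ≤ b - 1)]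
  have h1 : (b - a) * (a * b - 1) ≤ 0 :=
    mul_nonpos_of_nonpos_of_nonneg (by linarith) (by linarith)
  have h2 : (b - a) * (a * b - 1) / (a * b) ≤ 0 :=
    div_nonpos_of_nonpos_of_nonneg h1 (by positivity)
  linarith

/-- Monotonicity in the heterogeneity parameter `κ` of the unique positive
root `a(κ)` of `2a²(p−n)² + a(p−n)(p−2n₁)(κ+1/κ) − 2n₁(p−n₁) = 0`. -/
theorem heterogeneity_degree_monotonicity
    (p n₁ n₂ : ℕ) (hn₁ : 0 < n₁) (hn₂ : 0 < n₂) (hover : n₁ + n₂ < p) :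
    ∀ q : ℝ → ℝ → ℝ,
      q = (fun κ a =>
        2 * a ^ 2 * ((p : ℝ) - ((n₁ : ℝ) + (n₂ : ℝ))) ^ 2
          + a * ((p : ℝ) - ((n₁ : ℝ) + (n₂ : ℝ))) * ((p : ℝ) - 2 * (n₁ : ℝ))
              * (κ + 1 / κ)
          - 2 * (n₁ : ℝ) * ((p : ℝ) - (n₁ : ℝ))) →
      -- existence and uniqueness of the positive root, for every κ ≥ 1
      (∀ κ : ℝ, 1 ≤ κ → ∃! a : ℝ, 0 < a ∧ q κ a = 0) ∧
      -- (i) and (ii): monotonicity of the positive root in κ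
      (∀ κ₁ κ₂ a₁ a₂ : ℝ, 1 ≤ κ₂ → κ₂ < κ₁ →
        0 < a₁ → q κ₁ a₁ = 0 → 0 < a₂ → q κ₂ a₂ = 0 →
        ((2 * n₁ < p → a₁ ≤ a₂) ∧ (p < 2 * n₁ → a₂ ≤ a₁))) ∧
      -- (iii): if n₁ = p/2 the root does not depend on κ
      (2 * n₁ = p → ∀ κ₁ κ₂ a₁ a₂ : ℝ, 1 ≤ κ₁ → 1 ≤ κ₂ →
        0 < a₁ → q κ₁ a₁ = 0 → 0 < a₂ → q κ₂ a₂ = 0 → a₁ = a₂) := by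
  intro q hq
  subst hq
  have hp : ((n₁ : ℝ) + (n₂ : ℝ)) < p := by exact_mod_cast hover
  have hn1 : (0 : ℝ) < n₁ := by exact_mod_cast hn₁
  have hn2 : (0 : ℝ) < n₂ := by exact_mod_cast hn₂
  have hA : (0 : ℝ) < 2 * ((p : ℝ) - ((n₁ : ℝ) + (n₂ : ℝ))) ^ 2 := by
    have : (0 : ℝ) < (p : ℝ) - ((n₁ : ℝ) + (n₂ : ℝ)) := by linarith
    positivity
  have hC : (0 : ℝ) < 2 * (n₁ : ℝ) * ((p : ℝ) - (n₁ : ℝ)) := by nlinarith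
  refine ⟨?_, ?_, ?_⟩
  · -- existence and uniqueness
    intro κ hκ
    obtain ⟨a, ha, ea⟩ := quad_exists (2 * ((p : ℝ) - ((n₁ : ℝ) + (n₂ : ℝ))) ^ 2)
      (((p : ℝ) - ((n₁ : ℝ) + (n₂ : ℝ))) * ((p : ℝ) - 2 * (n₁ : ℝ)) * (κ + 1 / κ))
      (2 * (n₁ : ℝ) * ((p : ℝ) - (n₁ : ℝ))) hA hC
    refine ⟨a, ⟨ha, by linear_combination ea⟩, ?_⟩
    rintro b ⟨hb, eb⟩
    exact quad_unique _ _ _ b a hA hC hb (by linear_combination eb) ha ea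
  · -- monotonicity
    intro κ₁ κ₂ a₁ a₂ hκ₂ hlt ha₁ e₁ ha₂ e₂
    have hκ₂0 : (0 : ℝ) < κ₂ := by linarith
    have hκ₁0 : (0 : ℝ) < κ₁ := by linarith
    have ht : κ₂ + 1 / κ₂ ≤ κ₁ + 1 / κ₁ := t_mono hκ₂ hlt.le
    have e₁' : 2 * ((p : ℝ) - ((n₁ : ℝ) + (n₂ : ℝ))) ^ 2 * a₁ ^ 2
        + (((p : ℝ) - ((n₁ : ℝ) + (n₂ : ℝ))) * ((p : ℝ) - 2 * (n₁ : ℝ)) * (κ₁ + 1 / κ₁)) * a₁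
        - 2 * (n₁ : ℝ) * ((p : ℝ) - (n₁ : ℝ)) = 0 := by linear_combination e₁
    have e₂' : 2 * ((p : ℝ) - ((n₁ : ℝ) + (n₂ : ℝ))) ^ 2 * a₂ ^ 2
        + (((p : ℝ) - ((n₁ : ℝ) + (n₂ : ℝ))) * ((p : ℝ) - 2 * (n₁ : ℝ)) * (κ₂ + 1 / κ₂)) * a₂
        - 2 * (n₁ : ℝ) * ((p : ℝ) - (n₁ : ℝ)) = 0 := by linear_combination e₂
    constructor
    · intro h2n
      have h2n' : 2 * (n₁ : ℝ) < p := by exact_mod_cast h2n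
      have hc : (0 : ℝ) < ((p : ℝ) - ((n₁ : ℝ) + (n₂ : ℝ))) * ((p : ℝ) - 2 * (n₁ : ℝ)) :=
        mul_pos (by linarith) (by linarith)
      refine quad_le (2 * ((p : ℝ) - ((n₁ : ℝ) + (n₂ : ℝ))) ^ 2)
        (((p : ℝ) - ((n₁ : ℝ) + (n₂ : ℝ))) * ((p : ℝ) - 2 * (n₁ : ℝ)) * (κ₂ + 1 / κ₂))
        (2 * (n₁ : ℝ) * ((p : ℝ) - (n₁ : ℝ))) a₂ a₁ hA hC ha₂ e₂' ha₁ ?_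
      nlinarith [mul_nonneg (mul_pos hc ha₁).le (sub_nonneg.2 ht)]
    · intro h2n
      have h2n' : (p : ℝ) < 2 * (n₁ : ℝ) := by exact_mod_cast h2n
      have hc : ((p : ℝ) - ((n₁ : ℝ) + (n₂ : ℝ))) * ((p : ℝ) - 2 * (n₁ : ℝ)) < 0 :=
        mul_neg_of_pos_of_neg (by linarith) (by linarith)
      refine quad_le (2 * ((p : ℝ) - ((n₁ : ℝ) + (n₂ : ℝ))) ^ 2)
        (((p : ℝ) - ((n₁ : ℝ) + (n₂ : ℝ))) * ((p : ℝ) - 2 * (n₁ : ℝ)) * (κ₁ + 1 / κ₁))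
        (2 * (n₁ : ℝ) * ((p : ℝ) - (n₁ : ℝ))) a₁ a₂ hA hC ha₁ e₁' ha₂ ?_
      nlinarith [mul_nonneg (mul_pos (neg_pos.2 hc) ha₂).le (sub_nonneg.2 ht)]
  · -- case p = 2 n₁
    intro hp2 κ₁ κ₂ a₁ a₂ hκ₁ hκ₂ ha₁ e₁ ha₂ e₂
    have hP : (p : ℝ) = 2 * (n₁ : ℝ) := by exact_mod_cast hp2.symm
    have e₁' : 2 * ((p : ℝ) - ((n₁ : ℝ) + (n₂ : ℝ))) ^ 2 * a₁ ^ 2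
        - 2 * (n₁ : ℝ) * ((p : ℝ) - (n₁ : ℝ)) = 0 := by
      linear_combination e₁ - a₁ * ((p : ℝ) - ((n₁ : ℝ) + (n₂ : ℝ))) * (κ₁ + 1 / κ₁) * hP
    have e₂' : 2 * ((p : ℝ) - ((n₁ : ℝ) + (n₂ : ℝ))) ^ 2 * a₂ ^ 2
        - 2 * (n₁ : ℝ) * ((p : ℝ) - (n₁ : ℝ)) = 0 := by
      linear_combination e₂ - a₂ * ((p : ℝ) - ((n₁ : ℝ) + (n₂ : ℝ))) * (κ₂ + 1 / κ₂) * hP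
    have hsq : a₁ ^ 2 = a₂ ^ 2 := by
      have h := sub_eq_zero.2 (e₁'.trans e₂'.symm)
      have hA' : (2 * ((p : ℝ) - ((n₁ : ℝ) + (n₂ : ℝ))) ^ 2) ≠ 0 := hA.ne'
      have h2 : 2 * ((p : ℝ) - ((n₁ : ℝ) + (n₂ : ℝ))) ^ 2 * (a₁ ^ 2 - a₂ ^ 2) = 0 := by
        linear_combination e₁' - e₂'
      rcases mul_eq_zero.mp h2 with h3 | h3
      · exact absurd h3 hA'
      · linarith [sub_eq_zero.mp h3]
    calc a₁ = Real.sqrt (a₁ ^ 2) := (Real.sqrt_sq ha₁.le).symm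
    _ = Real.sqrt (a₂ ^ 2) := by rw [hsq]
    _ = a₂ := Real.sqrt_sq ha₂.le
end

section
/- Fix τ ∈ (0,1). Let p, n₁, n₂ be positive integers, n := n₁+n₂, γ := p/n, r₁ := n₁/n, r₂ := n₂/n, with 1+τ ≤ p/n₁, p/n₂, p/n ≤ 1/τ, let λ_i⁽¹⁾, λ_i⁽²⁾ ∈ [τ, 1/τ] for i = 1,…,p, and let 0 < λ ≤ 1/τ. Then there is exactly one pair (a₁, a₂) with a₁ > 0 and a₂ > 0 satisfying the system a₁ − r₁ + γ·p⁻¹Σ_{i=1}^p a₁λ_i⁽¹⁾/(a₁λ_i⁽¹⁾ + a₂λ_i⁽²⁾ + λ) = 0 and a₂ − r₂ + γ·p⁻¹Σ_{i=1}^p a₂λ_i⁽²⁾/(a₁λ_i⁽¹⁾ + a₂λ_i⁽²⁾ + λ) = 0. Moreover there exist constants c, C > 0 depending only on τ such that c·min{λ, r₁} < a₁ < Cλ and c·min{λ, r₂} < a₂ < Cλ. -/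
/-!
Write the equations as a fixed-point problem `x = T x` for `x = (a₁, a₂)`, with
`Tⱼ x = rⱼ / (1 + κ Σᵢ λᵢ⁽ʲ⁾ / (a₁λᵢ⁽¹⁾ + a₂λᵢ⁽²⁾ + λ))` and `κ = γ / p`. On the nonnegative
quadrant `T` is monotone and maps the box `[0, r₁] × [0, r₂]` into itself, so Knaster–Tarski
gives a fixed point, which is automatically positive. Since `λ > 0` is not rescaled,
`T (t • x) < t • T x` componentwise for `t > 1`; comparing two positive fixed points `x, y`
through the least `t` with `x ≤ t • y` then forces `x ≤ y`, hence uniqueness.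

For the bounds, every denominator is at least `λ`, so the first equation gives
`a₁ ≥ r₁λ / (λ + γ/τ)`, of order `τ³λ`. Adding the two equations and using
`Σ (a₁λ⁽¹⁾ + a₂λ⁽²⁾) / D = p − λ Σ 1 / D` gives `a₁ + a₂ + γ − 1 = γλ p⁻¹ Σ 1 / D`, and
`D ≥ τ(a₁ + a₂) + λ` together with `γ ≥ 1 + τ` yields `a₁ + a₂ ≤ λ / τ³`.
-/

open Set Function

theorem exists_isFixedPt_of_monotoneOn_Icc {α β : Type*} [ConditionallyCompleteLattice α]
    [ConditionallyCompleteLattice β] {a b : α × β} (hab : a ≤ b) {f : α × β → α × β}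
    (hf : MonotoneOn f (Icc a b)) (hmaps : MapsTo f (Icc a b) (Icc a b)) :
    ∃ x ∈ Icc a b, IsFixedPt f x := by
  have : Fact (a.1 ≤ b.1) := ⟨hab.1⟩
  have : Fact (a.2 ≤ b.2) := ⟨hab.2⟩
  have mem (y : Icc a.1 b.1 × Icc a.2 b.2) : ((y.1 : α), (y.2 : β)) ∈ Icc a b :=
    ⟨⟨y.1.2.1, y.2.2.1⟩, ⟨y.1.2.2, y.2.2.2⟩⟩
  let g : Icc a.1 b.1 × Icc a.2 b.2 →o Icc a.1 b.1 × Icc a.2 b.2 :=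
    { toFun := fun y =>
        (⟨_, (hmaps (mem y)).1.1, (hmaps (mem y)).2.1⟩,
          ⟨_, (hmaps (mem y)).1.2, (hmaps (mem y)).2.2⟩)
      monotone' := fun y z hyz => hf (mem y) (mem z) ⟨hyz.1, hyz.2⟩ }
  have hfix := g.map_lfp
  exact ⟨_, mem (OrderHom.lfp g), Prod.ext (congrArg (fun y => (y.1 : α)) hfix)
    (congrArg (fun y => (y.2 : β)) hfix)⟩

theorem le_of_isFixedPt_of_smul_lt {f : ℝ × ℝ → ℝ × ℝ}
    (hf : MonotoneOn f (Ioi 0 ×ˢ Ioi 0))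
    (hsub : ∀ x ∈ Ioi (0 : ℝ) ×ˢ Ioi (0 : ℝ), ∀ t : ℝ, 1 < t →
      (f (t • x)).1 < t * (f x).1 ∧ (f (t • x)).2 < t * (f x).2)
    {x y : ℝ × ℝ} (hx : x ∈ Ioi 0 ×ˢ Ioi 0) (hy : y ∈ Ioi 0 ×ˢ Ioi 0)
    (hfx : IsFixedPt f x) (hfy : IsFixedPt f y) : x ≤ y := by
  have hy₁ : 0 < y.1 := hy.1
  have hy₂ : 0 < y.2 := hy.2
  by_contra hxy
  set t := max (x.1 / y.1) (x.2 / y.2)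
  have ht : 1 < t := by
    rcases not_and_or.mp (Prod.le_def.not.mp hxy) with h | h
    · exact lt_max_of_lt_left ((one_lt_div hy₁).mpr (not_le.mp h))
    · exact lt_max_of_lt_right ((one_lt_div hy₂).mpr (not_le.mp h))
  have hty : t • y ∈ Ioi (0 : ℝ) ×ˢ Ioi (0 : ℝ) :=
    ⟨mul_pos (by linarith) hy₁, mul_pos (by linarith) hy₂⟩
  have hle : x ≤ t • y :=
    ⟨(div_le_iff₀ hy₁).mp (le_max_left _ _), (div_le_iff₀ hy₂).mp (le_max_right _ _)⟩
  have hfle : f x ≤ f (t • y) := hf hx hty hle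
  obtain ⟨h₁, h₂⟩ := hsub y hy t ht
  rw [hfx] at hfle
  rw [hfy] at h₁ h₂
  exact lt_irrefl t (max_lt ((div_lt_iff₀ hy₁).mpr (hfle.1.trans_lt h₁))
    ((div_lt_iff₀ hy₂).mpr (hfle.2.trans_lt h₂)))

noncomputable section

namespace SelfConsistent

variable {ι : Type*} [Fintype ι] (w₁ w₂ : ι → ℝ) (lam κ : ℝ)

def resolventSum (w : ι → ℝ) (x : ℝ × ℝ) : ℝ :=
  ∑ i, w i / (x.1 * w₁ i + x.2 * w₂ i + lam)

def component (r : ℝ) (w : ι → ℝ) (x : ℝ × ℝ) : ℝ :=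
  r / (1 + κ * resolventSum w₁ w₂ lam w x)

-- The map `T` of the header, with `κ` standing for `γ / p`.
def map (r₁ r₂ : ℝ) (x : ℝ × ℝ) : ℝ × ℝ :=
  (component w₁ w₂ lam κ r₁ w₁ x, component w₁ w₂ lam κ r₂ w₂ x)

variable {w₁ w₂ lam κ} {w : ι → ℝ} {x : ℝ × ℝ}

lemma denom_pos {u v : ℝ} (hx : 0 ≤ x) (hu : 0 ≤ u) (hv : 0 ≤ v) (hlam : 0 < lam) :
    0 < x.1 * u + x.2 * v + lam := by
  have := mul_nonneg hx.1 hu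
  have := mul_nonneg hx.2 hv
  linarith

lemma resolventSum_nonneg (hw₁ : ∀ i, 0 ≤ w₁ i) (hw₂ : ∀ i, 0 ≤ w₂ i) (hlam : 0 < lam)
    (hw : ∀ i, 0 ≤ w i) (hx : 0 ≤ x) :
    0 ≤ resolventSum w₁ w₂ lam w x :=
  Finset.sum_nonneg fun i _ => div_nonneg (hw i) (denom_pos hx (hw₁ i) (hw₂ i) hlam).le

lemma resolventSum_antitoneOn (hw₁ : ∀ i, 0 ≤ w₁ i) (hw₂ : ∀ i, 0 ≤ w₂ i) (hlam : 0 < lam)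
    (hw : ∀ i, 0 ≤ w i) :
    AntitoneOn (resolventSum w₁ w₂ lam w) (Ici 0) := fun x hx y hy hxy =>
  Finset.sum_le_sum fun i _ => div_le_div_of_nonneg_left (hw i) (denom_pos hx (hw₁ i) (hw₂ i) hlam)
    (by nlinarith [mul_le_mul_of_nonneg_right hxy.1 (hw₁ i),
      mul_le_mul_of_nonneg_right hxy.2 (hw₂ i)])

lemma resolventSum_le_mul_smul (hw₁ : ∀ i, 0 ≤ w₁ i) (hw₂ : ∀ i, 0 ≤ w₂ i) (hlam : 0 < lam)
    (hw : ∀ i, 0 ≤ w i) (hx : 0 ≤ x) {t : ℝ} (ht : 1 ≤ t) :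
    resolventSum w₁ w₂ lam w x ≤ t * resolventSum w₁ w₂ lam w (t • x) := by
  have htx : 0 ≤ t • x := smul_nonneg (by linarith) hx
  rw [resolventSum, resolventSum, Finset.mul_sum]
  refine Finset.sum_le_sum fun i _ => ?_
  have hD := denom_pos hx (hw₁ i) (hw₂ i) hlam
  have hD' := denom_pos htx (hw₁ i) (hw₂ i) hlam
  simp only [Prod.smul_fst, Prod.smul_snd, smul_eq_mul] at hD' ⊢
  rw [mul_div_assoc', div_le_div_iff₀ hD hD']
  nlinarith [mul_nonneg (hw i) hlam.le]

lemma resolventSum_le_sum_div (hlam : 0 < lam) {m : ℝ} (hm : 0 ≤ m) (hm₁ : ∀ i, m ≤ w₁ i)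
    (hm₂ : ∀ i, m ≤ w₂ i) (hw : ∀ i, 0 ≤ w i) (hx : 0 ≤ x) :
    resolventSum w₁ w₂ lam w x ≤ (∑ i, w i) / (m * (x.1 + x.2) + lam) := by
  have hx₁ : 0 ≤ x.1 := hx.1
  have hx₂ : 0 ≤ x.2 := hx.2
  have hmx : 0 < m * (x.1 + x.2) + lam := by positivity
  rw [resolventSum, Finset.sum_div]
  refine Finset.sum_le_sum fun i _ => div_le_div_of_nonneg_left (hw i) hmx ?_
  nlinarith [mul_le_mul_of_nonneg_left (hm₁ i) hx.1, mul_le_mul_of_nonneg_left (hm₂ i) hx.2]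

lemma fst_mul_resolventSum_add (hw₁ : ∀ i, 0 ≤ w₁ i) (hw₂ : ∀ i, 0 ≤ w₂ i) (hlam : 0 < lam)
    (hx : 0 ≤ x) :
    x.1 * resolventSum w₁ w₂ lam w₁ x + x.2 * resolventSum w₁ w₂ lam w₂ x
      + lam * resolventSum w₁ w₂ lam 1 x = Fintype.card ι := by
  simp only [resolventSum, Finset.mul_sum, ← Finset.sum_add_distrib, Pi.one_apply]
  trans ∑ _i : ι, (1 : ℝ)
  · refine Finset.sum_congr rfl fun i _ => ?_
    have := (denom_pos hx (hw₁ i) (hw₂ i) hlam).ne'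
    field_simp
  · simp

lemma one_add_mul_resolventSum_pos (hw₁ : ∀ i, 0 ≤ w₁ i) (hw₂ : ∀ i, 0 ≤ w₂ i)
    (hlam : 0 < lam) (hκ : 0 ≤ κ) (hw : ∀ i, 0 ≤ w i) (hx : 0 ≤ x) :
    0 < 1 + κ * resolventSum w₁ w₂ lam w x := by
  have := mul_nonneg hκ (resolventSum_nonneg hw₁ hw₂ hlam hw hx)
  linarith

lemma component_pos (hw₁ : ∀ i, 0 ≤ w₁ i) (hw₂ : ∀ i, 0 ≤ w₂ i) (hlam : 0 < lam)
    (hκ : 0 ≤ κ) {r : ℝ} (hr : 0 < r) (hw : ∀ i, 0 ≤ w i) (hx : 0 ≤ x) :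
    0 < component w₁ w₂ lam κ r w x :=
  div_pos hr (one_add_mul_resolventSum_pos hw₁ hw₂ hlam hκ hw hx)

lemma component_le (hw₁ : ∀ i, 0 ≤ w₁ i) (hw₂ : ∀ i, 0 ≤ w₂ i) (hlam : 0 < lam)
    (hκ : 0 ≤ κ) {r : ℝ} (hr : 0 ≤ r) (hw : ∀ i, 0 ≤ w i) (hx : 0 ≤ x) :
    component w₁ w₂ lam κ r w x ≤ r :=
  div_le_self hr (le_add_of_nonneg_right (mul_nonneg hκ (resolventSum_nonneg hw₁ hw₂ hlam hw hx)))

lemma monotoneOn_component (hw₁ : ∀ i, 0 ≤ w₁ i) (hw₂ : ∀ i, 0 ≤ w₂ i) (hlam : 0 < lam)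
    (hκ : 0 ≤ κ) {r : ℝ} (hr : 0 ≤ r) (hw : ∀ i, 0 ≤ w i) :
    MonotoneOn (component w₁ w₂ lam κ r w) (Ici 0) := fun _ hx _ hy hxy =>
  div_le_div_of_nonneg_left hr (one_add_mul_resolventSum_pos hw₁ hw₂ hlam hκ hw hy)
    (add_le_add_right (mul_le_mul_of_nonneg_left
      (resolventSum_antitoneOn hw₁ hw₂ hlam hw hx hy hxy) hκ) 1)

lemma component_smul_lt (hw₁ : ∀ i, 0 ≤ w₁ i) (hw₂ : ∀ i, 0 ≤ w₂ i) (hlam : 0 < lam)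
    (hκ : 0 ≤ κ) {r : ℝ} (hr : 0 < r) (hw : ∀ i, 0 ≤ w i) (hx : 0 ≤ x) {t : ℝ} (ht : 1 < t) :
    component w₁ w₂ lam κ r w (t • x) < t * component w₁ w₂ lam κ r w x := by
  have htx : 0 ≤ t • x := smul_nonneg (by linarith) hx
  have hS := resolventSum_le_mul_smul hw₁ hw₂ hlam hw hx ht.le
  have hS₀ := resolventSum_nonneg hw₁ hw₂ hlam hw htx
  rw [component, component, mul_div_assoc', div_lt_div_iff₀
    (one_add_mul_resolventSum_pos hw₁ hw₂ hlam hκ hw htx)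
    (one_add_mul_resolventSum_pos hw₁ hw₂ hlam hκ hw hx)]
  nlinarith [mul_le_mul_of_nonneg_left hS (mul_nonneg hr.le hκ), mul_nonneg hκ hS₀]

lemma mul_div_add_le_component (hw₁ : ∀ i, 0 ≤ w₁ i) (hw₂ : ∀ i, 0 ≤ w₂ i) (hlam : 0 < lam)
    (hκ : 0 ≤ κ) {r : ℝ} (hr : 0 ≤ r) (hw : ∀ i, 0 ≤ w i) (hx : 0 ≤ x) :
    r * lam / (lam + κ * ∑ i, w i) ≤ component w₁ w₂ lam κ r w x := by
  have hS := resolventSum_le_sum_div hlam le_rfl hw₁ hw₂ hw hx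
  rw [zero_mul, zero_add] at hS
  have hwsum : 0 ≤ ∑ i, w i := Finset.sum_nonneg fun i _ => hw i
  rw [show r * lam / (lam + κ * ∑ i, w i) = r / (1 + κ * ((∑ i, w i) / lam)) by
    field_simp]
  exact div_le_div_of_nonneg_left hr (one_add_mul_resolventSum_pos hw₁ hw₂ hlam hκ hw hx)
    (add_le_add_right (mul_le_mul_of_nonneg_left hS hκ) 1)

lemma component_eq_iff (hw₁ : ∀ i, 0 ≤ w₁ i) (hw₂ : ∀ i, 0 ≤ w₂ i) (hlam : 0 < lam)
    (hκ : 0 ≤ κ) {r a : ℝ} (hw : ∀ i, 0 ≤ w i) (hx : 0 ≤ x) :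
    component w₁ w₂ lam κ r w x = a ↔
      a - r + κ * ∑ i, a * w i / (x.1 * w₁ i + x.2 * w₂ i + lam) = 0 := by
  have hsum : ∑ i, a * w i / (x.1 * w₁ i + x.2 * w₂ i + lam)
      = a * resolventSum w₁ w₂ lam w x := by
    simp only [resolventSum, Finset.mul_sum, mul_div_assoc]
  rw [component, div_eq_iff (one_add_mul_resolventSum_pos hw₁ hw₂ hlam hκ hw hx).ne', hsum]
  constructor <;> intro h <;> linear_combination -h

lemma monotoneOn_map (hw₁ : ∀ i, 0 ≤ w₁ i) (hw₂ : ∀ i, 0 ≤ w₂ i) (hlam : 0 < lam)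
    (hκ : 0 ≤ κ) {r₁ r₂ : ℝ} (hr₁ : 0 ≤ r₁) (hr₂ : 0 ≤ r₂) :
    MonotoneOn (map w₁ w₂ lam κ r₁ r₂) (Ici 0) := fun _ hx _ hy hxy =>
  ⟨monotoneOn_component hw₁ hw₂ hlam hκ hr₁ hw₁ hx hy hxy,
    monotoneOn_component hw₁ hw₂ hlam hκ hr₂ hw₂ hx hy hxy⟩

lemma map_smul_lt (hw₁ : ∀ i, 0 ≤ w₁ i) (hw₂ : ∀ i, 0 ≤ w₂ i) (hlam : 0 < lam)
    (hκ : 0 ≤ κ) {r₁ r₂ : ℝ} (hr₁ : 0 < r₁) (hr₂ : 0 < r₂) (hx : 0 ≤ x) {t : ℝ} (ht : 1 < t) :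
    (map w₁ w₂ lam κ r₁ r₂ (t • x)).1 < t * (map w₁ w₂ lam κ r₁ r₂ x).1 ∧
      (map w₁ w₂ lam κ r₁ r₂ (t • x)).2 < t * (map w₁ w₂ lam κ r₁ r₂ x).2 :=
  ⟨component_smul_lt hw₁ hw₂ hlam hκ hr₁ hw₁ hx ht, component_smul_lt hw₁ hw₂ hlam hκ hr₂ hw₂ hx ht⟩

lemma existsUnique_map_eq_self (hw₁ : ∀ i, 0 ≤ w₁ i) (hw₂ : ∀ i, 0 ≤ w₂ i) (hlam : 0 < lam)
    (hκ : 0 ≤ κ) {r₁ r₂ : ℝ} (hr₁ : 0 < r₁) (hr₂ : 0 < r₂) :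
    ∃! x : ℝ × ℝ, (0 < x.1 ∧ 0 < x.2) ∧ map w₁ w₂ lam κ r₁ r₂ x = x := by
  have hmono := monotoneOn_map hw₁ hw₂ hlam hκ hr₁.le hr₂.le
  have hpos (x : ℝ × ℝ) (hx : 0 ≤ x) :
      0 < (map w₁ w₂ lam κ r₁ r₂ x).1 ∧ 0 < (map w₁ w₂ lam κ r₁ r₂ x).2 :=
    ⟨component_pos hw₁ hw₂ hlam hκ hr₁ hw₁ hx, component_pos hw₁ hw₂ hlam hκ hr₂ hw₂ hx⟩
  have hmaps : MapsTo (map w₁ w₂ lam κ r₁ r₂) (Icc 0 (r₁, r₂)) (Icc 0 (r₁, r₂)) :=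
    fun x hx => ⟨⟨(hpos x hx.1).1.le, (hpos x hx.1).2.le⟩,
      ⟨component_le hw₁ hw₂ hlam hκ hr₁.le hw₁ hx.1, component_le hw₁ hw₂ hlam hκ hr₂.le hw₂ hx.1⟩⟩
  obtain ⟨x, hx, hfix⟩ :=
    exists_isFixedPt_of_monotoneOn_Icc (⟨hr₁.le, hr₂.le⟩ : (0 : ℝ × ℝ) ≤ (r₁, r₂))
    (hmono.mono Icc_subset_Ici_self) hmaps
  have hx₀ : x ∈ Ioi (0 : ℝ) ×ˢ Ioi (0 : ℝ) := hfix ▸ hpos x hx.1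
  have hmono' : MonotoneOn (map w₁ w₂ lam κ r₁ r₂) (Ioi 0 ×ˢ Ioi 0) :=
    hmono.mono fun x hx => ⟨hx.1.le, hx.2.le⟩
  have hsub (x : ℝ × ℝ) (hx : x ∈ Ioi (0 : ℝ) ×ˢ Ioi (0 : ℝ)) (t : ℝ) (ht : 1 < t) :=
    map_smul_lt hw₁ hw₂ hlam hκ hr₁ hr₂ ⟨hx.1.le, hx.2.le⟩ ht
  refine ⟨x, ⟨hx₀, hfix⟩, fun y ⟨hy₀, hfiy⟩ => le_antisymm ?_ ?_⟩
  · exact le_of_isFixedPt_of_smul_lt hmono' hsub hy₀ hx₀ hfiy hfix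
  · exact le_of_isFixedPt_of_smul_lt hmono' hsub hx₀ hy₀ hfix hfiy

lemma map_eq_self_iff (hw₁ : ∀ i, 0 ≤ w₁ i) (hw₂ : ∀ i, 0 ≤ w₂ i) (hlam : 0 < lam)
    (hκ : 0 ≤ κ) {r₁ r₂ : ℝ} (hx : 0 ≤ x) :
    map w₁ w₂ lam κ r₁ r₂ x = x ↔
      (x.1 - r₁ + κ * ∑ i, x.1 * w₁ i / (x.1 * w₁ i + x.2 * w₂ i + lam) = 0) ∧
      (x.2 - r₂ + κ * ∑ i, x.2 * w₂ i / (x.1 * w₁ i + x.2 * w₂ i + lam) = 0) := by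
  rw [Prod.ext_iff, map, component_eq_iff hw₁ hw₂ hlam hκ hw₁ hx,
    component_eq_iff hw₁ hw₂ hlam hκ hw₂ hx]

lemma mul_le_of_map_eq_self (hw₁ : ∀ i, 0 ≤ w₁ i) (hw₂ : ∀ i, 0 ≤ w₂ i) (hlam : 0 < lam)
    (hκ : 0 ≤ κ) {r₁ r₂ m : ℝ} (hm : 0 ≤ m) (hm₁ : ∀ i, m ≤ w₁ i) (hm₂ : ∀ i, m ≤ w₂ i)
    (hx : 0 ≤ x) (hfix : map w₁ w₂ lam κ r₁ r₂ x = x) :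
    (x.1 + x.2 + κ * Fintype.card ι - (r₁ + r₂)) * (m * (x.1 + x.2) + lam)
      ≤ κ * Fintype.card ι * lam := by
  have hx₁ : 0 ≤ x.1 := hx.1
  have hx₂ : 0 ≤ x.2 := hx.2
  have hmx : 0 < m * (x.1 + x.2) + lam := by positivity
  have h₁ : r₁ = x.1 * (1 + κ * resolventSum w₁ w₂ lam w₁ x) :=
    (div_eq_iff (one_add_mul_resolventSum_pos hw₁ hw₂ hlam hκ hw₁ hx).ne').mp
      (congrArg Prod.fst hfix)
  have h₂ : r₂ = x.2 * (1 + κ * resolventSum w₁ w₂ lam w₂ x) :=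
    (div_eq_iff (one_add_mul_resolventSum_pos hw₁ hw₂ hlam hκ hw₂ hx).ne').mp
      (congrArg Prod.snd hfix)
  have hid := fst_mul_resolventSum_add hw₁ hw₂ hlam hx
  have hS := resolventSum_le_sum_div (w := 1) hlam hm hm₁ hm₂ (fun _ => zero_le_one) hx
  simp only [Pi.one_apply, Finset.sum_const, Finset.card_univ, nsmul_eq_mul, mul_one] at hS
  have hS' := mul_le_mul_of_nonneg_left ((le_div_iff₀ hmx).mp hS) (mul_nonneg hκ hlam.le)
  have heq : x.1 + x.2 + κ * Fintype.card ι - (r₁ + r₂) = κ * lam * resolventSum w₁ w₂ lam 1 x := by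
    rw [h₁, h₂, ← hid]
    ring
  rw [heq]
  linarith

lemma tau_cube_mul_div_two_le_component {τ : ℝ} (hτ : 0 < τ) (hτ₁ : τ ≤ 1)
    (hw₁ : ∀ i, 0 ≤ w₁ i) (hw₂ : ∀ i, 0 ≤ w₂ i) (hlam : 0 < lam) (hlamτ : lam ≤ 1 / τ)
    (hκ : 0 ≤ κ) (hκτ : κ * Fintype.card ι ≤ 1 / τ) {r : ℝ} (hr : τ ≤ r)
    (hw : ∀ i, 0 ≤ w i) (hwτ : ∀ i, w i ≤ 1 / τ) (hx : 0 ≤ x) :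
    τ ^ 3 * lam / 2 ≤ component w₁ w₂ lam κ r w x := by
  have hκsum : κ * ∑ i, w i ≤ 1 / τ ^ 2 := calc
    κ * ∑ i, w i ≤ κ * (Fintype.card ι * (1 / τ)) := by
      refine mul_le_mul_of_nonneg_left ?_ hκ
      simpa using Finset.sum_le_card_nsmul Finset.univ w (1 / τ) fun i _ => hwτ i
    _ ≤ 1 / τ * (1 / τ) := by
      rw [← mul_assoc]
      exact mul_le_mul_of_nonneg_right hκτ (by positivity)
    _ = 1 / τ ^ 2 := by ring
  have hlam' : lam ≤ 1 / τ ^ 2 :=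
    hlamτ.trans (one_div_le_one_div_of_le (by positivity) (by nlinarith))
  have hD : 0 < lam + κ * ∑ i, w i :=
    add_pos_of_pos_of_nonneg hlam (mul_nonneg hκ (Finset.sum_nonneg fun i _ => hw i))
  refine le_trans ?_ (mul_div_add_le_component hw₁ hw₂ hlam hκ (hτ.le.trans hr) hw hx)
  rw [le_div_iff₀ hD]
  calc τ ^ 3 * lam / 2 * (lam + κ * ∑ i, w i) ≤ τ ^ 3 * lam / 2 * (2 / τ ^ 2) :=
        mul_le_mul_of_nonneg_left
          (by linarith [show (2 : ℝ) / τ ^ 2 = 1 / τ ^ 2 + 1 / τ ^ 2 by ring]) (by positivity)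
    _ = τ * lam := by field_simp
    _ ≤ r * lam := mul_le_mul_of_nonneg_right hr hlam.le

lemma add_le_div_tau_cube_of_map_eq_self {τ : ℝ} (hτ : 0 < τ) (hw₁ : ∀ i, τ ≤ w₁ i)
    (hw₂ : ∀ i, τ ≤ w₂ i) (hlam : 0 < lam) (hκ₁ : 1 + τ ≤ κ * Fintype.card ι)
    (hκ₂ : κ * Fintype.card ι ≤ 1 / τ) {r₁ r₂ : ℝ} (hr : r₁ + r₂ = 1) (hx : 0 ≤ x)
    (hfix : map w₁ w₂ lam κ r₁ r₂ x = x) :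
    x.1 + x.2 ≤ lam / τ ^ 3 := by
  have hκ : 0 ≤ κ := by
    by_contra h
    nlinarith [(Nat.cast_nonneg (Fintype.card ι) : (0 : ℝ) ≤ _)]
  have h := mul_le_of_map_eq_self (fun i => hτ.le.trans (hw₁ i)) (fun i => hτ.le.trans (hw₂ i))
    hlam hκ hτ.le hw₁ hw₂ hx hfix
  rw [hr] at h
  set s := x.1 + x.2
  set γ := κ * Fintype.card ι
  have hs : 0 ≤ s := add_nonneg hx.1 hx.2
  have hγτ : γ * τ ≤ 1 := (le_div_iff₀ hτ).mp hκ₂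
  rw [le_div_iff₀ (by positivity)]
  calc s * τ ^ 3 ≤ τ * ((s + τ) * (τ * s + lam)) := by
        nlinarith [mul_nonneg (pow_nonneg hτ.le 2) (mul_nonneg hs hs),
          mul_nonneg (mul_nonneg hτ.le hs) hlam.le, mul_pos (pow_pos hτ 2) hlam]
    _ ≤ τ * ((s + γ - 1) * (τ * s + lam)) := by gcongr; linarith
    _ ≤ τ * (γ * lam) := by gcongr
    _ ≤ lam := by nlinarith

end SelfConsistent

end

lemma le_div_of_div_le_one_div_of_one_le_div {τ a b p : ℝ} (hτ : 0 < τ) (ha : 0 < a)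
    (hb : 0 < b) (h₁ : p / a ≤ 1 / τ) (h₂ : 1 ≤ p / b) : τ ≤ a / b := by
  have hpa : p * τ ≤ 1 * a := (div_le_div_iff₀ ha hτ).mp h₁
  have hbp : b ≤ p := by simpa using (le_div_iff₀ hb).mp h₂
  rw [le_div_iff₀ hb]
  nlinarith

open SelfConsistent

/-- Existence, uniqueness, and bounds (with constants depending only on
`τ`) for the positive solution of the self-consistent equations at `z = −λ`. -/
theorem self_consistent_equations_real_existence_uniqueness_bounds
    (τ : ℝ) (hτ : τ ∈ Set.Ioo (0 : ℝ) 1) :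
    ∃ c C : ℝ, 0 < c ∧ 0 < C ∧
      ∀ (p n₁ n₂ : ℕ) (lam1 lam2 : Fin p → ℝ) (lam : ℝ),
        0 < n₁ → 0 < n₂ →
        (1 + τ ≤ (p : ℝ) / (n₁ : ℝ) ∧ (p : ℝ) / (n₁ : ℝ) ≤ 1 / τ) →
        (1 + τ ≤ (p : ℝ) / (n₂ : ℝ) ∧ (p : ℝ) / (n₂ : ℝ) ≤ 1 / τ) →
        (1 + τ ≤ (p : ℝ) / ((n₁ : ℝ) + (n₂ : ℝ)) ∧
          (p : ℝ) / ((n₁ : ℝ) + (n₂ : ℝ)) ≤ 1 / τ) →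
        (∀ i, lam1 i ∈ Set.Icc τ (1 / τ) ∧ lam2 i ∈ Set.Icc τ (1 / τ)) →
        0 < lam → lam ≤ 1 / τ →
        ((∃! ab : ℝ × ℝ, (0 < ab.1 ∧ 0 < ab.2) ∧
          (ab.1 - (n₁ : ℝ) / ((n₁ : ℝ) + (n₂ : ℝ))
            + ((p : ℝ) / ((n₁ : ℝ) + (n₂ : ℝ))) * ((p : ℝ))⁻¹ *
              ∑ i, (ab.1 * lam1 i) / (ab.1 * lam1 i + ab.2 * lam2 i + lam) = 0) ∧
          (ab.2 - (n₂ : ℝ) / ((n₁ : ℝ) + (n₂ : ℝ))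
            + ((p : ℝ) / ((n₁ : ℝ) + (n₂ : ℝ))) * ((p : ℝ))⁻¹ *
              ∑ i, (ab.2 * lam2 i) / (ab.1 * lam1 i + ab.2 * lam2 i + lam) = 0)) ∧
        (∀ a1 a2 : ℝ, 0 < a1 → 0 < a2 →
          (a1 - (n₁ : ℝ) / ((n₁ : ℝ) + (n₂ : ℝ))
            + ((p : ℝ) / ((n₁ : ℝ) + (n₂ : ℝ))) * ((p : ℝ))⁻¹ *
              ∑ i, (a1 * lam1 i) / (a1 * lam1 i + a2 * lam2 i + lam) = 0) →
          (a2 - (n₂ : ℝ) / ((n₁ : ℝ) + (n₂ : ℝ))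
            + ((p : ℝ) / ((n₁ : ℝ) + (n₂ : ℝ))) * ((p : ℝ))⁻¹ *
              ∑ i, (a2 * lam2 i) / (a1 * lam1 i + a2 * lam2 i + lam) = 0) →
          (c * min lam ((n₁ : ℝ) / ((n₁ : ℝ) + (n₂ : ℝ))) < a1 ∧ a1 < C * lam ∧
            c * min lam ((n₂ : ℝ) / ((n₁ : ℝ) + (n₂ : ℝ))) < a2 ∧ a2 < C * lam))) := by
  obtain ⟨hτ₀, hτ₁⟩ := hτ
  refine ⟨τ ^ 3 / 4, 1 / τ ^ 3, by positivity, by positivity, ?_⟩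
  intro p n₁ n₂ w₁ w₂ lam hn₁ hn₂ h₁ h₂ h hw hlam hlamτ
  have hn₁' : (0 : ℝ) < n₁ := Nat.cast_pos.mpr hn₁
  have hn₂' : (0 : ℝ) < n₂ := Nat.cast_pos.mpr hn₂
  have hN : (0 : ℝ) < n₁ + n₂ := add_pos hn₁' hn₂'
  have hγ : 1 ≤ (p : ℝ) / (n₁ + n₂) := by linarith [h.1]
  have hp : (0 : ℝ) < p := (div_pos_iff_of_pos_right hN).mp (by linarith)
  set κ : ℝ := p / (n₁ + n₂) * (p : ℝ)⁻¹
  have hκ : 0 ≤ κ := by positivity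
  have hκp : κ * Fintype.card (Fin p) = p / (n₁ + n₂) := by
    rw [Fintype.card_fin, inv_mul_cancel_right₀ hp.ne']
  have hw₁ i : 0 ≤ w₁ i := hτ₀.le.trans (hw i).1.1
  have hw₂ i : 0 ≤ w₂ i := hτ₀.le.trans (hw i).2.1
  have hr₁ := le_div_of_div_le_one_div_of_one_le_div hτ₀ hn₁' hN h₁.2 hγ
  have hr₂ := le_div_of_div_le_one_div_of_one_le_div hτ₀ hn₂' hN h₂.2 hγ
  refine ⟨(existsUnique_congr fun x => and_congr_right fun hx =>
      map_eq_self_iff hw₁ hw₂ hlam hκ ⟨hx.1.le, hx.2.le⟩).mp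
    (existsUnique_map_eq_self hw₁ hw₂ hlam hκ (by positivity) (by positivity)), ?_⟩
  intro a₁ a₂ ha₁ ha₂ e₁ e₂
  have hx : (0 : ℝ × ℝ) ≤ (a₁, a₂) := ⟨ha₁.le, ha₂.le⟩
  have hfix := (map_eq_self_iff hw₁ hw₂ hlam hκ hx).mpr ⟨e₁, e₂⟩
  have low₁ : τ ^ 3 * lam / 2 ≤ a₁ := (tau_cube_mul_div_two_le_component hτ₀ hτ₁.le hw₁ hw₂
    hlam hlamτ hκ (hκp.trans_le h.2) hr₁ hw₁ (fun i => (hw i).1.2) hx).trans_eq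
    (congrArg Prod.fst hfix)
  have low₂ : τ ^ 3 * lam / 2 ≤ a₂ := (tau_cube_mul_div_two_le_component hτ₀ hτ₁.le hw₁ hw₂
    hlam hlamτ hκ (hκp.trans_le h.2) hr₂ hw₂ (fun i => (hw i).2.2) hx).trans_eq
    (congrArg Prod.snd hfix)
  have up : a₁ + a₂ ≤ lam / τ ^ 3 := add_le_div_tau_cube_of_map_eq_self hτ₀
    (fun i => (hw i).1.1) (fun i => (hw i).2.1) hlam (h.1.trans_eq hκp.symm) (hκp.trans_le h.2)
    (by field_simp) hx hfix
  have hmin (r : ℝ) : τ ^ 3 / 4 * min lam r < τ ^ 3 * lam / 2 := by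
    nlinarith [min_le_left lam r, pow_pos hτ₀ 3]
  refine ⟨(hmin _).trans_le low₁, ?_, (hmin _).trans_le low₂, ?_⟩ <;>
    rw [one_div_mul_eq_div] <;> linarith
end

section
/- Fix τ ∈ (0,1). Let γ₁, γ₂ ∈ [1+τ, 1/τ] satisfy 1/γ₁ + 1/γ₂ ≤ 1 − τ, and set α := γ₁/γ₂. For s > 0 let f₁(s) be the unique positive solution of sγ₁f² + (1+α−γ₁+s)f − 1 = 0, and define f̃₁(s) := s·f₁(s), f̃₁(0) := 1 − 1/γ₁ − 1/γ₂. Then there exist constants c, C > 0 depending only on τ such that for all 0 < s < c: (i) |f̃₁(s) − f̃₁(0)| ≤ Cs; and (ii) with f₂(s) := f₁(s)²(1+γ₁f₁(s))²/((1+γ₁f₁(s))² − γ₁f₁(s)²) and f₃(s) := α/(1+γ₁f₁(s)) + s, the quantity (1 − 2f₁(s)f₃(s) + f₂(s)f₃(s)²)/(1 − γ₁f₂(s)(f₃(s)−s)/(1+γ₁f₁(s))) differs from (1/γ₁)(1 − 1/γ₁)/(1 − 1/γ₁ − 1/γ₂) by at most Cs. -/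
/-!
With `g = γ₁ f₁(s)` and `b = γ₁ - 1 - γ₁/γ₂ ≥ τ γ₁`, the quadratic for `f₁` reads
`s g - b = γ₁ / g - s`, which places `s g` in `(b, b + γ₁ s / b)`. This gives (i), and also
`1 / g < s / b`. Eliminating `s` through the quadratic turns the bias ratio into a rational
function of `g` alone, whose limit as `g → ∞` is the ridgeless limit `(γ₁ - 1) / (γ₁ b)`, with
error `O(1 / g) = O(s)`.
-/

/-- The bias ratio written in `g = γ₁ f₁(s)` and `b = γ₁ - 1 - γ₁ / γ₂`. -/
noncomputable def shiftBiasRational (γ b g : ℝ) : ℝ :=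
  g ^ 2 * ((γ - 1) * g + γ + 1) / (γ * (1 + g) * (b * g ^ 2 + 2 * γ * g + γ))

section

variable {γ b s f g f2 f3 : ℝ}

theorem lt_mul_mul_and_sub_lt_of_quadratic_eq_zero (hb : 0 < b) (hbγ : b < γ) (hs : 0 < s)
    (hf : 0 < f) (h : s * γ * f ^ 2 + (s - b) * f - 1 = 0) :
    b < s * (γ * f) ∧ s * (γ * f) - b < γ * s / b := by
  have hquad_div_f : s * (γ * f) - b = 1 / f - s := by
    field_simp
    linear_combination h
  have hsf : s * f < 1 := by
    by_contra! hsf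
    have : s * (γ * f) - b ≤ 0 := by
      rw [hquad_div_f, sub_nonpos, div_le_iff₀ hf]
      linarith
    nlinarith
  have hlow : b < s * (γ * f) := by
    have : s < 1 / f := by rw [lt_div_iff₀ hf]; linarith
    linarith
  refine ⟨hlow, ?_⟩
  calc s * (γ * f) - b = 1 / f - s := hquad_div_f
    _ < 1 / f := by linarith
    _ < γ * s / b := by rw [div_lt_div_iff₀ hf hb]; linarith

theorem shiftBias_ratio_eq_shiftBiasRational (hγ : 1 ≤ γ) (hb : 0 < b) (hf : 0 < f)
    (h : s * γ * f ^ 2 + (s - b) * f - 1 = 0)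
    (hf2 : f2 = f ^ 2 * (1 + γ * f) ^ 2 / ((1 + γ * f) ^ 2 - γ * f ^ 2))
    (hf3 : f3 = (γ - 1 - b) / (1 + γ * f) + s) :
    (1 - 2 * f * f3 + f2 * f3 ^ 2) / (1 - γ * f2 * (f3 - s) / (1 + γ * f))
      = shiftBiasRational γ b (γ * f) := by
  obtain ⟨g, hg, rfl⟩ : ∃ g, 0 < g ∧ f = g / γ := ⟨γ * f, by positivity, by field_simp⟩
  have hγ0 : 0 < γ := by linarith
  have hγg : γ * (g / γ) = g := mul_div_cancel₀ g hγ0.ne'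
  have hQ : 0 < (γ - 1) * g ^ 2 + 2 * γ * g + γ := by nlinarith
  have hQf : (1 + γ * (g / γ)) ^ 2 - γ * (g / γ) ^ 2
      = ((γ - 1) * g ^ 2 + 2 * γ * g + γ) / γ := by
    field_simp
    ring
  have hs : s = (b * g + γ) / (g * (1 + g)) := by
    rw [eq_div_iff (by positivity)]
    field_simp at h
    linear_combination h
  have hf3' : f3 = ((γ - 1) * g + γ) / (g * (1 + g)) := by
    rw [hf3, hγg, hs]
    field_simp
    ring
  -- `generalize` hides the expanded form of `Q`, so that `field_simp` can use `hQ`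
  have hN : 1 - 2 * (g / γ) * f3 + f2 * f3 ^ 2
      = g ^ 2 * ((γ - 1) * g + γ + 1) / (γ * ((γ - 1) * g ^ 2 + 2 * γ * g + γ) * (1 + g)) := by
    rw [hf2, hf3', hQf, hγg]
    generalize hQd : (γ - 1) * g ^ 2 + 2 * γ * g + γ = Q at hQ ⊢
    field_simp
    subst hQd
    ring
  have hD : 1 - γ * f2 * (f3 - s) / (1 + γ * (g / γ))
      = (b * g ^ 2 + 2 * γ * g + γ) / ((γ - 1) * g ^ 2 + 2 * γ * g + γ) := by
    rw [hf2, hf3, hQf, hγg]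
    generalize hQd : (γ - 1) * g ^ 2 + 2 * γ * g + γ = Q at hQ ⊢
    field_simp
    subst hQd
    ring
  rw [hN, hD, hγg, shiftBiasRational, div_div_div_eq,
    div_eq_div_iff (by positivity) (by positivity)]
  ring

theorem abs_shiftBiasRational_sub_le (hγ : 1 ≤ γ) (hb : 0 < b) (hbγ : b ≤ γ) (hg : 1 ≤ g) :
    |shiftBiasRational γ b g - (γ - 1) / (γ * b)| ≤ 6 * γ / (b ^ 2 * g) := by
  have hg0 : 0 < g := by linarith
  have hden : 0 < γ * b * (1 + g) * (b * g ^ 2 + 2 * γ * g + γ) := by positivity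
  have hdiff : shiftBiasRational γ b g - (γ - 1) / (γ * b)
      = (2 * (b - γ ^ 2 + γ) * g ^ 2 - 3 * γ * (γ - 1) * g - γ * (γ - 1))
          / (γ * b * (1 + g) * (b * g ^ 2 + 2 * γ * g + γ)) := by
    rw [shiftBiasRational, div_sub_div _ _ (by positivity) (by positivity),
      div_eq_div_iff (by positivity) hden.ne']
    ring
  have hnum : |2 * (b - γ ^ 2 + γ) * g ^ 2 - 3 * γ * (γ - 1) * g - γ * (γ - 1)|
      ≤ 6 * γ ^ 2 * g ^ 2 := by
    have hγγ : 0 ≤ γ * (γ - 1) := by nlinarith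
    have hg2 : g ≤ g ^ 2 := by nlinarith
    rw [abs_le]
    constructor <;>
      nlinarith [mul_le_mul_of_nonneg_left hg2 hγγ, mul_nonneg hγγ hg0.le,
        mul_le_mul_of_nonneg_right hbγ (sq_nonneg g),
        mul_le_mul_of_nonneg_right hγγ (sq_nonneg g), mul_le_mul_of_nonneg_left hg (sq_nonneg γ)]
  have hden' : γ * b ^ 2 * g ^ 3 ≤ γ * b * (1 + g) * (b * g ^ 2 + 2 * γ * g + γ) := by
    have h1 : γ * b * g ≤ γ * b * (1 + g) := by nlinarith [mul_pos (by positivity : 0 < γ) hb]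
    have h2 : b * g ^ 2 ≤ b * g ^ 2 + 2 * γ * g + γ := by nlinarith
    calc γ * b ^ 2 * g ^ 3 = (γ * b * g) * (b * g ^ 2) := by ring
      _ ≤ _ := mul_le_mul h1 h2 (by positivity) (by positivity)
  rw [hdiff, abs_div, abs_of_pos hden]
  calc _ ≤ 6 * γ ^ 2 * g ^ 2 / (γ * b ^ 2 * g ^ 3) := by gcongr
    _ = 6 * γ / (b ^ 2 * g) := by field_simp

theorem abs_mul_sub_div_le_of_quadratic_eq_zero (hb : 0 < b) (hbγ : b < γ) (hs : 0 < s)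
    (hf : 0 < f) (h : s * γ * f ^ 2 + (s - b) * f - 1 = 0) :
    |s * f - b / γ| ≤ s / b := by
  obtain ⟨hlow, hup⟩ := lt_mul_mul_and_sub_lt_of_quadratic_eq_zero hb hbγ hs hf h
  have hγ0 : 0 < γ := hb.trans hbγ
  have hdiff : s * f - b / γ = (s * (γ * f) - b) / γ := by field_simp
  rw [hdiff, abs_of_pos (div_pos (sub_pos.2 hlow) hγ0)]
  calc (s * (γ * f) - b) / γ ≤ γ * s / b / γ := by gcongr
    _ = s / b := by field_simp

theorem abs_shiftBias_ratio_sub_le (hγ : 1 ≤ γ) (hb : 0 < b) (hbγ : b < γ) (hs : 0 < s)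
    (hsb : s ≤ b) (hf : 0 < f) (h : s * γ * f ^ 2 + (s - b) * f - 1 = 0)
    (hf2 : f2 = f ^ 2 * (1 + γ * f) ^ 2 / ((1 + γ * f) ^ 2 - γ * f ^ 2))
    (hf3 : f3 = (γ - 1 - b) / (1 + γ * f) + s) :
    |(1 - 2 * f * f3 + f2 * f3 ^ 2) / (1 - γ * f2 * (f3 - s) / (1 + γ * f))
        - (γ - 1) / (γ * b)| ≤ 6 * γ * s / b ^ 3 := by
  have hsg : b < s * (γ * f) := (lt_mul_mul_and_sub_lt_of_quadratic_eq_zero hb hbγ hs hf h).1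
  have hg : 1 ≤ γ * f := by
    have : s * 1 < s * (γ * f) := by linarith
    exact (lt_of_mul_lt_mul_left this hs.le).le
  rw [shiftBias_ratio_eq_shiftBiasRational hγ hb hf h hf2 hf3]
  calc _ ≤ 6 * γ / (b ^ 2 * (γ * f)) := abs_shiftBiasRational_sub_le hγ hb hbγ.le hg
    _ ≤ 6 * γ * s / b ^ 3 := by
      rw [div_le_div_iff₀ (by positivity) (by positivity)]
      have := mul_le_mul_of_nonneg_left hsg.le (by positivity : 0 ≤ 6 * γ * b ^ 2)
      linarith

end

theorem mul_le_sub_one_sub_div {τ γ₁ γ₂ : ℝ} (hγ₁ : 0 < γ₁) (h : 1 / γ₁ + 1 / γ₂ ≤ 1 - τ) :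
    τ * γ₁ ≤ γ₁ - 1 - γ₁ / γ₂ := by
  have := mul_le_mul_of_nonneg_left h hγ₁.le
  field_simp at this ⊢
  linarith

/-- Deterministic small-penalty estimates: the ridge quantities
`s·f₁(s)` and the limiting shift-bias coefficient converge at rate `O(s)` to their
ridgeless limits `1 − 1/γ₁ − 1/γ₂` and `(1/γ₁)(1−1/γ₁)/(1−1/γ₁−1/γ₂)`, with constants
depending only on `τ`. -/
theorem model_shift_small_penalty_closeness
    (τ : ℝ) (hτ : τ ∈ Set.Ioo (0 : ℝ) 1) :
    ∃ c C : ℝ, 0 < c ∧ 0 < C ∧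
      ∀ γ₁ γ₂ : ℝ,
        γ₁ ∈ Set.Icc (1 + τ) (1 / τ) → γ₂ ∈ Set.Icc (1 + τ) (1 / τ) →
        1 / γ₁ + 1 / γ₂ ≤ 1 - τ →
        ∀ f1 : ℝ → ℝ,
          (∀ s : ℝ, 0 < s → 0 < f1 s ∧
            s * γ₁ * (f1 s) ^ 2 + (1 + γ₁ / γ₂ - γ₁ + s) * f1 s - 1 = 0) →
          ∀ s : ℝ, 0 < s → s < c →
            (|s * f1 s - (1 - 1 / γ₁ - 1 / γ₂)| ≤ C * s) ∧
            ∀ f2 f3 : ℝ,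
              f2 = (f1 s) ^ 2 * (1 + γ₁ * f1 s) ^ 2
                / ((1 + γ₁ * f1 s) ^ 2 - γ₁ * (f1 s) ^ 2) →
              f3 = (γ₁ / γ₂) / (1 + γ₁ * f1 s) + s →
              |(1 - 2 * f1 s * f3 + f2 * f3 ^ 2)
                  / (1 - γ₁ * f2 * (f3 - s) / (1 + γ₁ * f1 s))
                - (1 / γ₁) * (1 - 1 / γ₁) / (1 - 1 / γ₁ - 1 / γ₂)| ≤ C * s := by
  obtain ⟨hτ0, hτ1⟩ := hτ
  refine ⟨τ, 6 / τ ^ 3, hτ0, by positivity, ?_⟩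
  rintro γ₁ γ₂ ⟨hγ₁, -⟩ ⟨hγ₂, -⟩ hsum f1 hf1 s hs hsτ
  obtain ⟨hf, hquad⟩ := hf1 s hs
  have hγ₁0 : 0 < γ₁ := by linarith
  set b := γ₁ - 1 - γ₁ / γ₂ with hb_def
  have hτb : τ * γ₁ ≤ b := mul_le_sub_one_sub_div hγ₁0 hsum
  have hb : 0 < b := by nlinarith
  have hbγ : b < γ₁ := by
    have : 0 < γ₁ / γ₂ := div_pos hγ₁0 (by linarith)
    linarith
  have hquad' : s * γ₁ * f1 s ^ 2 + (s - b) * f1 s - 1 = 0 := by linear_combination hquad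
  have hlim₁ : 1 - 1 / γ₁ - 1 / γ₂ = b / γ₁ := by rw [hb_def]; field_simp
  have hlim₂ : 1 / γ₁ * (1 - 1 / γ₁) / (1 - 1 / γ₁ - 1 / γ₂) = (γ₁ - 1) / (γ₁ * b) := by
    rw [hlim₁]; field_simp
  refine ⟨?_, fun f2 f3 hf2 hf3 => ?_⟩
  · have hτC : 1 / τ ≤ 6 / τ ^ 3 := by
      rw [div_le_div_iff₀ hτ0 (by positivity)]
      nlinarith [mul_lt_mul_of_pos_left hτ1 (pow_pos hτ0 2)]
    calc _ ≤ s / b := hlim₁ ▸ abs_mul_sub_div_le_of_quadratic_eq_zero hb hbγ hs hf hquad'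
      _ ≤ s / τ := div_le_div_of_nonneg_left hs.le hτ0 (by nlinarith)
      _ = 1 / τ * s := by ring
      _ ≤ 6 / τ ^ 3 * s := by gcongr
  · calc _ ≤ 6 * γ₁ * s / b ^ 3 := hlim₂ ▸ abs_shiftBias_ratio_sub_le (by linarith) hb hbγ hs
          (by nlinarith) hf hquad' hf2 (by rw [hf3, hb_def]; ring)
      _ ≤ 6 * γ₁ * s / (τ * γ₁) ^ 3 := by gcongr
      _ = 6 / τ ^ 3 * s / γ₁ ^ 2 := by field_simp
      _ ≤ 6 / τ ^ 3 * s := div_le_self (by positivity) (by nlinarith)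
end
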